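/- arXiv:math/0409068 — 6 statements merged into one kernel-verified Lean document; each statement's English description precedes it below -/
import Mathlib

section
/- The minimal cardinality of a γ-family which is not finitely τ-diagonalizable is equal to the bounding number 𝔟. -/
open Set Filter Cardinal
open scoped Classical

noncomputable section

/-- The Cantor space `2^ℕ`. -/
abbrev Cantor := ℕ → Bool

/-- Arrays: elements of `2^(ℕ×ℕ)`. -/
abbrev Arr := ℕ × ℕ → Bool

/-- A γ-array: every row is eventually 1. -/
def IsGammaArray (A : Arr) : Prop := ∀ n, ∀ᶠ m in atTop, A (n, m) = true

/-- A γ-family: a set of γ-arrays. -/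
def GammaFamily (𝒜 : Set Arr) : Prop := ∀ A ∈ 𝒜, IsGammaArray A

/-- A family of arrays is finitely τ-diagonalizable. -/
def FinTauDiag (𝒜 : Set Arr) : Prop :=
  ∃ F : ℕ → Finset ℕ,
    (∀ A ∈ 𝒜, ∃ᶠ n in atTop, ∃ m ∈ F n, A (n, m) = true) ∧
    (∀ A ∈ 𝒜, ∀ B ∈ 𝒜,
      (∀ᶠ n in atTop, ∀ m ∈ F n, A (n, m) ≤ B (n, m)) ∨
      (∀ᶠ n in atTop, ∀ m ∈ F n, B (n, m) ≤ A (n, m)))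

/-- A family of arrays is semi τ-diagonalizable (via a partial function with domain `D`). -/
def SemiTauDiag (𝒜 : Set Arr) : Prop :=
  ∃ (D : Set ℕ) (g : ℕ → ℕ),
    (∀ A ∈ 𝒜, ∃ᶠ n in atTop, n ∈ D ∧ A (n, g n) = true) ∧
    (∀ A ∈ 𝒜, ∀ B ∈ 𝒜,
      (∀ᶠ n in atTop, n ∈ D → A (n, g n) ≤ B (n, g n)) ∨
      (∀ᶠ n in atTop, n ∈ D → B (n, g n) ≤ A (n, g n)))

/-- A τ-family of arrays. -/
def TauFamily (𝒜 : Set Arr) : Prop :=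
  (∀ A ∈ 𝒜, ∀ n, ∃ᶠ m in atTop, A (n, m) = true) ∧
  (∀ A ∈ 𝒜, ∀ B ∈ 𝒜, ∀ n,
    (∀ᶠ m in atTop, A (n, m) ≤ B (n, m)) ∨
    (∀ᶠ m in atTop, B (n, m) ≤ A (n, m)))

/-- A family of arrays is τ-diagonalizable. -/
def TauDiag (𝒜 : Set Arr) : Prop :=
  ∃ g : ℕ → ℕ,
    (∀ A ∈ 𝒜, ∃ᶠ n in atTop, A (n, g n) = true) ∧
    (∀ A ∈ 𝒜, ∀ B ∈ 𝒜,
      (∀ᶠ n in atTop, A (n, g n) ≤ B (n, g n)) ∨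
      (∀ᶠ n in atTop, B (n, g n) ≤ A (n, g n)))

/-- A family of arrays is o-diagonalizable. -/
def ODiag (𝒜 : Set Arr) : Prop :=
  ∃ g : ℕ → ℕ, ∀ A ∈ 𝒜, ∃ n, A (n, g n) = true

/-- An ω-family of arrays: rows frequently 1 and, for each `n`,
the family of the `n`-th rows is centered. -/
def OmegaFamily (𝒜 : Set Arr) : Prop :=
  (∀ A ∈ 𝒜, ∀ n, ∃ᶠ m in atTop, A (n, m) = true) ∧
  (∀ n, ∀ 𝒜' ⊆ 𝒜, 𝒜'.Finite → {m | ∀ A ∈ 𝒜', A (n, m) = true}.Infinite)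

/-- The bounding number 𝔟. -/
def bNum : Cardinal :=
  sInf {c | ∃ F : Set (ℕ → ℕ), Cardinal.mk F = c ∧
    ¬ ∃ g : ℕ → ℕ, ∀ f ∈ F, ∀ᶠ n in atTop, f n ≤ g n}

/-- The splitting number 𝔰. -/
def sNum : Cardinal :=
  sInf {c | ∃ S : Set (Set ℕ), Cardinal.mk S = c ∧ (∀ s ∈ S, s.Infinite) ∧
    ∀ a : Set ℕ, a.Infinite → ∃ s ∈ S, (a ∩ s).Infinite ∧ (a \ s).Infinite}

/-- The tower number 𝔱. -/
def tNum : Cardinal :=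
  sInf {c | ∃ T : Set (Set ℕ), Cardinal.mk T = c ∧ (∀ t ∈ T, t.Infinite) ∧
    (∀ a ∈ T, ∀ b ∈ T, (a \ b).Finite ∨ (b \ a).Finite) ∧
    ¬ ∃ a : Set ℕ, a.Infinite ∧ ∀ t ∈ T, (a \ t).Finite}

/-- cov(M): the least number of meager sets covering the Baire space. -/
def covM : Cardinal :=
  sInf {c | ∃ 𝒞 : Set (Set (ℕ → ℕ)), Cardinal.mk 𝒞 = c ∧
    (∀ M ∈ 𝒞, IsMeagre M) ∧ ⋃₀ 𝒞 = Set.univ}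

/-- The o-diagonalization number: the minimal cardinality of a τ-family
which is not o-diagonalizable. -/
def odNum : Cardinal :=
  sInf {c | ∃ 𝒜 : Set Arr, Cardinal.mk 𝒜 = c ∧ TauFamily 𝒜 ∧ ¬ ODiag 𝒜}

section Covers

variable (α : Type*)

/-- A countable cover of the space `α`. -/
def CountCover (𝒰 : Set (Set α)) : Prop :=
  𝒰.Countable ∧ ⋃₀ 𝒰 = Set.univ ∧ Set.univ ∉ 𝒰

/-- A (countable) γ-cover. -/
def GammaCover (𝒰 : Set (Set α)) : Prop :=
  CountCover α 𝒰 ∧ 𝒰.Infinite ∧ ∀ x : α, {U | U ∈ 𝒰 ∧ x ∉ U}.Finite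

/-- A (countable) τ-cover. -/
def TauCover (𝒰 : Set (Set α)) : Prop :=
  CountCover α 𝒰 ∧ (∀ x : α, {U | U ∈ 𝒰 ∧ x ∈ U}.Infinite) ∧
  ∀ x y : α, {U | U ∈ 𝒰 ∧ x ∈ U ∧ y ∉ U}.Finite ∨ {U | U ∈ 𝒰 ∧ y ∈ U ∧ x ∉ U}.Finite

/-- A (countable) ω-cover. -/
def OmegaCover (𝒰 : Set (Set α)) : Prop :=
  CountCover α 𝒰 ∧ ∀ F : Set α, F.Finite → ∃ U ∈ 𝒰, F ⊆ U

variable [TopologicalSpace α]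

/-- All members are open. -/
def OpenFam (𝒰 : Set (Set α)) : Prop := ∀ U ∈ 𝒰, IsOpen U

/-- All members are clopen. -/
def ClopenFam (𝒰 : Set (Set α)) : Prop := ∀ U ∈ 𝒰, IsClopen U

/-- The class O of countable open covers. -/
def OCov (𝒰 : Set (Set α)) : Prop := CountCover α 𝒰 ∧ OpenFam α 𝒰
/-- The class Γ of countable open γ-covers. -/
def OGamma (𝒰 : Set (Set α)) : Prop := GammaCover α 𝒰 ∧ OpenFam α 𝒰
/-- The class Τ of countable open τ-covers. -/
def OTau (𝒰 : Set (Set α)) : Prop := TauCover α 𝒰 ∧ OpenFam α 𝒰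
/-- The class Ω of countable open ω-covers. -/
def OOmega (𝒰 : Set (Set α)) : Prop := OmegaCover α 𝒰 ∧ OpenFam α 𝒰

/-- The class C of countable clopen covers. -/
def KCov (𝒰 : Set (Set α)) : Prop := CountCover α 𝒰 ∧ ClopenFam α 𝒰
/-- The class C_Γ of countable clopen γ-covers. -/
def KGamma (𝒰 : Set (Set α)) : Prop := GammaCover α 𝒰 ∧ ClopenFam α 𝒰
/-- The class C_Τ of countable clopen τ-covers. -/
def KTau (𝒰 : Set (Set α)) : Prop := TauCover α 𝒰 ∧ ClopenFam α 𝒰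

end Covers

/-- The selection principle S1(𝒜,ℬ). -/
def S1 (α : Type*) (𝒜 ℬ : Set (Set α) → Prop) : Prop :=
  ∀ U : ℕ → Set (Set α), (∀ n, 𝒜 (U n)) →
    ∃ V : ℕ → Set α, (∀ n, V n ∈ U n) ∧ ℬ (range V)

/-- The selection principle Sfin(𝒜,ℬ). -/
def SFin (α : Type*) (𝒜 ℬ : Set (Set α) → Prop) : Prop :=
  ∀ U : ℕ → Set (Set α), (∀ n, 𝒜 (U n)) →
    ∃ F : ℕ → Set (Set α), (∀ n, (F n).Finite ∧ F n ⊆ U n) ∧ ℬ (⋃ n, F n)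

/-- The selection principle Ufin(𝒜,ℬ). -/
def UFin (α : Type*) (𝒜 ℬ : Set (Set α) → Prop) : Prop :=
  ∀ U : ℕ → Set (Set α), (∀ n, 𝒜 (U n)) →
    (∀ n, ¬ ∃ F : Set (Set α), F ⊆ U n ∧ F.Finite ∧ ⋃₀ F = Set.univ) →
    ∃ F : ℕ → Set (Set α), (∀ n, (F n).Finite ∧ F n ⊆ U n) ∧
      ℬ (range fun n => ⋃₀ F n)

/-- The critical cardinality non(P) of a property `P` of sets of reals:
the minimal cardinality of an infinite subset of the Cantor space not satisfying `P`. -/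
def nonP (P : Set Cantor → Prop) : Cardinal :=
  sInf {c | ∃ X : Set Cantor, X.Infinite ∧ ¬ P X ∧ Cardinal.mk X = c}

/-- The collection of cardinalities of witnessing families of `f`-sequences for `θ_f`. -/
def ThetaSet (f : ℕ → ℕ) : Set Cardinal :=
  {c | ∃ ℱ : Set (ℕ → Set ℕ), Cardinal.mk ℱ = c ∧
    (∀ σ ∈ ℱ, ∀ n, σ n ⊆ Iio (f n)) ∧
    (∀ σ ∈ ℱ, ∀ᶠ n in atTop, (σ n).Nonempty) ∧
    (∀ σ ∈ ℱ, ∀ η ∈ ℱ, (∀ᶠ n in atTop, σ n ⊆ η n) ∨ (∀ᶠ n in atTop, η n ⊆ σ n)) ∧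
    ¬ ∃ g : ℕ → ℕ, ∀ σ ∈ ℱ, ∃ n, g n ∈ σ n}

/-- The cardinal θ_f; equal to 𝔠⁺ if no witnessing family exists. -/
def theta (f : ℕ → ℕ) : Cardinal :=
  if (ThetaSet f).Nonempty then sInf (ThetaSet f) else Order.succ Cardinal.continuum

/-- θ* = min over f (with all values ≥ 2) of θ_f. -/
def thetaStar : Cardinal :=
  sInf {c | ∃ f : ℕ → ℕ, (∀ n, 2 ≤ f n) ∧ theta f = c}

/-- The collection of cardinalities of witnessing families for `𝔈_f`. -/
def ESet (f : ℕ → ℕ) : Set Cardinal :=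
  {c | ∃ F : Set (ℕ → ℕ), Cardinal.mk F = c ∧ (∀ h ∈ F, ∀ n, h n < f n) ∧
    ∀ g : ℕ → ℕ, ∃ h ∈ F, ∀ n, h n ≠ g n}

/-- The cardinal 𝔈_f; equal to 𝔠⁺ if no witnessing family exists. -/
def ENum (f : ℕ → ℕ) : Cardinal :=
  if (ESet f).Nonempty then sInf (ESet f) else Order.succ Cardinal.continuum

/-- 𝔈* = min over f (with all values ≥ 1) of 𝔈_f. -/
def EStar : Cardinal :=
  sInf {c | ∃ f : ℕ → ℕ, (∀ n, 1 ≤ f n) ∧ ENum f = c}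



/-! ### Auxiliary material for `stmt0` -/

namespace Stmt0Aux

/-- The defining set of `bNum`. -/
def BSet : Set Cardinal :=
  {c | ∃ F : Set (ℕ → ℕ), Cardinal.mk F = c ∧
    ¬ ∃ g : ℕ → ℕ, ∀ f ∈ F, ∀ᶠ n in atTop, f n ≤ g n}

lemma bNum_eq : bNum = sInf BSet := rfl

lemma BSet_nonempty : BSet.Nonempty := by
  refine ⟨Cardinal.mk (Set.univ : Set (ℕ → ℕ)), Set.univ, rfl, ?_⟩
  rintro ⟨g, hg⟩
  obtain ⟨n, hn⟩ := (hg (fun n => g n + 1) (Set.mem_univ _)).exists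
  omega

lemma finite_bounded {F : Set (ℕ → ℕ)} (hF : F.Finite) :
    ∃ g : ℕ → ℕ, ∀ f ∈ F, ∀ᶠ n in atTop, f n ≤ g n :=
  ⟨fun n => hF.toFinset.sup fun f => f n, fun f hf =>
    Filter.Eventually.of_forall fun n =>
      Finset.le_sup (f := fun f => f n) (hF.mem_toFinset.mpr hf)⟩

lemma aleph0_le_bNum : ℵ₀ ≤ bNum := by
  rw [bNum_eq]
  refine le_csInf BSet_nonempty ?_
  rintro c ⟨F, rfl, hF⟩
  by_contra hlt
  push_neg at hlt
  exact hF (finite_bounded (Cardinal.lt_aleph0_iff_set_finite.mp hlt))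

lemma exists_unbounded_witness :
    ∃ F : Set (ℕ → ℕ), Cardinal.mk F = bNum ∧
      ¬ ∃ g : ℕ → ℕ, ∀ f ∈ F, ∀ᶠ n in atTop, f n ≤ g n := by
  obtain ⟨F, hc, hu⟩ := csInf_mem BSet_nonempty
  exact ⟨F, by rw [bNum_eq]; exact hc, hu⟩

/-- Monotone majorant of a function. -/
def monoF (f : ℕ → ℕ) : ℕ → ℕ := fun k => (Finset.range (k + 1)).sup f

lemma le_monoF (f : ℕ → ℕ) (k : ℕ) : f k ≤ monoF f k :=
  Finset.le_sup (Finset.self_mem_range_succ k)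

lemma monoF_mono (f : ℕ → ℕ) : Monotone (monoF f) := fun a b hab =>
  Finset.sup_mono (Finset.range_subset_range.mpr (by omega))

/-- Threshold array. -/
def thr (f : ℕ → ℕ) : Arr := fun q => decide (f q.1 ≤ q.2)

/-- Gap array: zero exactly on the interval `[f n, h n)`. -/
def gapA (f h : ℕ → ℕ) : Arr := fun q => decide (¬ (f q.1 ≤ q.2 ∧ q.2 < h q.1))

lemma thr_gamma (f : ℕ → ℕ) : IsGammaArray (thr f) := fun n =>
  Filter.eventually_atTop.mpr ⟨f n, fun m hm => by simp [thr, hm]⟩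

lemma gap_gamma (f h : ℕ → ℕ) : IsGammaArray (gapA f h) := fun n =>
  Filter.eventually_atTop.mpr ⟨h n, fun m hm => by
    simp only [gapA, decide_eq_true_eq]
    rintro ⟨-, h2⟩; omega⟩

end Stmt0Aux

open Stmt0Aux in
/-- The minimal cardinality of a γ-family which is not finitely τ-diagonalizable
is equal to the bounding number 𝔟. -/
theorem stmt0 :
    sInf {c | ∃ 𝒜 : Set Arr, Cardinal.mk 𝒜 = c ∧ GammaFamily 𝒜 ∧ ¬ FinTauDiag 𝒜} = bNum := by
  obtain ⟨F₀, hF₀card, hF₀unb⟩ := exists_unbounded_witness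
  set B : Set (ℕ → ℕ) := monoF '' F₀ with hB
  set Φ : (↥B ⊕ ↥B × ↥B) → Arr :=
    Sum.elim (fun p => thr p.1) (fun p => gapA p.1.1 p.2.1) with hΦ
  set 𝒜 : Set Arr := Set.range Φ with h𝒜
  have hγ : GammaFamily 𝒜 := by
    rintro A ⟨i, rfl⟩
    rcases i with p | p
    · exact thr_gamma _
    · exact gap_gamma _ _
  have hthr_mem : ∀ p ∈ B, thr p ∈ 𝒜 := fun p hp => ⟨Sum.inl ⟨p, hp⟩, rfl⟩
  have hgap_mem : ∀ p ∈ B, ∀ q ∈ B, gapA p q ∈ 𝒜 :=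
    fun p hp q hq => ⟨Sum.inr ⟨⟨p, hp⟩, ⟨q, hq⟩⟩, rfl⟩
  have hnd : ¬ FinTauDiag 𝒜 := by
    rintro ⟨F, ha, hb⟩
    have LD : ∀ f ∈ B, ∀ h ∈ B, ∀ c ∈ B,
        (∃ᶠ n in atTop, ∃ m ∈ F n, f n ≤ m ∧ m < h n) →
        (∃ᶠ n in atTop, ∃ m ∈ F n, h n ≤ m ∧ m < c n) → False := by
      intro f hf h hh c hc bad₁ bad₂
      rcases hb (gapA f h) (hgap_mem f hf h hh) (gapA h c) (hgap_mem h hh c hc) with h1 | h2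
      · obtain ⟨n, ⟨m, hmF, hm1, hm2⟩, hcomp⟩ := (bad₂.and_eventually h1).exists
        have hle := hcomp m hmF
        have e2 : gapA h c (n, m) = false := by
          simp only [gapA, decide_eq_false_iff_not, not_not]
          exact ⟨hm1, hm2⟩
        have e1 : gapA f h (n, m) = true := by
          simp only [gapA, decide_eq_true_eq]
          rintro ⟨-, h2'⟩; omega
        rw [e1, e2] at hle
        exact absurd hle (by simp)
      · obtain ⟨n, ⟨m, hmF, hm1, hm2⟩, hcomp⟩ := (bad₁.and_eventually h2).exists
        have hle := hcomp m hmF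
        have e1 : gapA f h (n, m) = false := by
          simp only [gapA, decide_eq_false_iff_not, not_not]
          exact ⟨hm1, hm2⟩
        have e2 : gapA h c (n, m) = true := by
          simp only [gapA, decide_eq_true_eq]
          rintro ⟨h1', -⟩; omega
        rw [e1, e2] at hle
        exact absurd hle (by simp)
    have LB : ∀ p ∈ B,
        (∀ c ∈ B, ¬ ∃ᶠ n in atTop, ∃ m ∈ F n, p n ≤ m ∧ m < c n) → False := by
      intro p hp hgood
      have haP := ha (thr p) (hthr_mem p hp)
      have H : ∀ k : ℕ, ∃ n, k ≤ n ∧ ∃ m, m ∈ F n ∧ p n ≤ m := by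
        intro k
        obtain ⟨n, hn, m, hmF, hm⟩ := Filter.frequently_atTop.mp haP k
        refine ⟨n, hn, m, hmF, ?_⟩
        simpa [thr] using hm
      choose nf hnf mf hmf₁ hmf₂ using H
      apply hF₀unb
      refine ⟨mf, fun f hf => ?_⟩
      have hcB : monoF f ∈ B := ⟨f, hf, rfl⟩
      have hK' : ∀ᶠ n in atTop, ¬ ∃ m ∈ F n, p n ≤ m ∧ m < monoF f n :=
        Filter.not_frequently.mp (hgood _ hcB)
      obtain ⟨K, hK⟩ := Filter.eventually_atTop.mp hK'
      refine Filter.eventually_atTop.mpr ⟨K, fun k hk => ?_⟩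
      have hKn := hK (nf k) (le_trans hk (hnf k))
      have hcle : monoF f (nf k) ≤ mf k := by
        by_contra hcon
        exact hKn ⟨mf k, hmf₁ k, hmf₂ k, not_le.mp hcon⟩
      calc f k ≤ monoF f k := le_monoF f k
        _ ≤ monoF f (nf k) := monoF_mono f (hnf k)
        _ ≤ mf k := hcle
    have hBne : B.Nonempty := by
      have hne : Cardinal.mk F₀ ≠ 0 := by
        rw [hF₀card]
        exact (lt_of_lt_of_le Cardinal.aleph0_pos aleph0_le_bNum).ne'
      rw [Cardinal.mk_ne_zero_iff] at hne
      obtain ⟨⟨f, hf⟩⟩ := hne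
      exact ⟨monoF f, f, hf, rfl⟩
    obtain ⟨p₀, hp₀⟩ := hBne
    by_cases h1 : ∀ c ∈ B, ¬ ∃ᶠ n in atTop, ∃ m ∈ F n, p₀ n ≤ m ∧ m < c n
    · exact LB p₀ hp₀ h1
    push_neg at h1
    obtain ⟨c₁, hc₁, bad₁⟩ := h1
    by_cases h2 : ∀ d ∈ B, ¬ ∃ᶠ n in atTop, ∃ m ∈ F n, c₁ n ≤ m ∧ m < d n
    · exact LB c₁ hc₁ h2
    push_neg at h2
    obtain ⟨d, hd, bad₂⟩ := h2
    exact LD p₀ hp₀ c₁ hc₁ d hd bad₁ bad₂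
  have hcard : Cardinal.mk 𝒜 ≤ bNum := by
    have hBle : Cardinal.mk ↥B ≤ bNum := le_of_le_of_eq Cardinal.mk_image_le hF₀card
    have h1 : Cardinal.mk 𝒜 ≤ Cardinal.mk (↥B ⊕ ↥B × ↥B) := Cardinal.mk_range_le
    have h2 : Cardinal.mk (↥B ⊕ ↥B × ↥B) = Cardinal.mk ↥B + Cardinal.mk ↥B * Cardinal.mk ↥B := by
      simp [Cardinal.mk_sum, Cardinal.mk_prod]
    calc Cardinal.mk 𝒜 ≤ Cardinal.mk ↥B + Cardinal.mk ↥B * Cardinal.mk ↥B := h2 ▸ h1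
      _ ≤ bNum + bNum * bNum := add_le_add hBle (mul_le_mul' hBle hBle)
      _ = bNum + bNum := by rw [Cardinal.mul_eq_self aleph0_le_bNum]
      _ = bNum := Cardinal.add_eq_self aleph0_le_bNum
  have hmem : Cardinal.mk 𝒜 ∈
      {c | ∃ 𝒜 : Set Arr, Cardinal.mk 𝒜 = c ∧ GammaFamily 𝒜 ∧ ¬ FinTauDiag 𝒜} :=
    ⟨𝒜, rfl, hγ, hnd⟩
  refine le_antisymm ((csInf_le' hmem).trans hcard) ?_
  refine le_csInf ⟨_, hmem⟩ ?_
  rintro c ⟨𝒜', h𝒜'c, hγ', hnd'⟩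
  have hfa : ∀ A ∈ 𝒜', ∃ fa : ℕ → ℕ, ∀ n m, fa n ≤ m → A (n, m) = true := by
    intro A hA
    choose fa hfa using fun n => Filter.eventually_atTop.mp (hγ' A hA n)
    exact ⟨fa, hfa⟩
  choose! fa hfa using hfa
  have hunb : ¬ ∃ g : ℕ → ℕ, ∀ f ∈ fa '' 𝒜', ∀ᶠ n in atTop, f n ≤ g n := by
    rintro ⟨g, hg⟩
    apply hnd'
    refine ⟨fun n => {g n}, ?_, ?_⟩
    · intro A hA
      have h := hg (fa A) ⟨A, hA, rfl⟩
      exact (h.mono fun n hn =>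
        ⟨g n, Finset.mem_singleton_self _, hfa A hA n (g n) hn⟩).frequently
    · intro A hA A' hA'
      left
      have h := hg (fa A') ⟨A', hA', rfl⟩
      refine h.mono fun n hn m hm => ?_
      rw [Finset.mem_singleton] at hm
      subst hm
      rw [hfa A' hA' n (g n) hn]
      exact Bool.le_true _
  have hb1 : bNum ≤ Cardinal.mk (fa '' 𝒜') := csInf_le' ⟨fa '' 𝒜', rfl, hunb⟩
  exact h𝒜'c ▸ hb1.trans Cardinal.mk_image_le

end
end

section
/- The minimal cardinality of a γ-family which is not semi τ-diagonalizable is equal to the bounding number 𝔟. -/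
open Set Filter Cardinal
open scoped Classical

noncomputable section

/-!
If a γ-family has fewer than 𝔟 members, the thresholds beyond which its rows are constantly 1 are
dominated by a single `g`, and `g` diagonalizes the family on all of `ℕ`.

Conversely, fix an unbounded family `F` of monotone functions of size `𝔟` and consider the
arrays whose `n`-th row vanishes exactly on the window `[x n, y n)`, for `x ∈ F ∪ {0}` and
`y ∈ F`. For a semi τ-diagonalizer `(D, g)`, the values `g n` cannot fall infinitely often into
two adjacent windows `[x n, ρ n)` and `[ρ n, σ n)`, as the two arrays would then be incomparable
along `g`. Hence some `ρ ∈ F` is such that, for every `σ ∈ F`, eventually on the infinite set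
`{n ∈ D | ρ n ≤ g n}` also `σ n ≤ g n`; by monotonicity this bounds `F`.
-/

def EventuallyBounded (F : Set (ℕ → ℕ)) : Prop :=
  ∃ g : ℕ → ℕ, ∀ f ∈ F, ∀ᶠ n in atTop, f n ≤ g n

lemma eventuallyBounded_of_finite {F : Set (ℕ → ℕ)} (hF : F.Finite) : EventuallyBounded F :=
  ⟨fun n => hF.toFinset.sup (· n), fun _ hf =>
    .of_forall fun n => Finset.le_sup (f := fun f : ℕ → ℕ => f n) (hF.mem_toFinset.mpr hf)⟩

lemma not_eventuallyBounded_univ : ¬ EventuallyBounded univ := fun ⟨g, hg⟩ =>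
  (hg (g · + 1) (mem_univ _)).exists.elim fun n hn => by omega

lemma eventuallyBounded_of_eventually_le_on {F : Set (ℕ → ℕ)} {T : Set ℕ} {g : ℕ → ℕ}
    (hmono : ∀ f ∈ F, Monotone f) (hT : T.Infinite)
    (hle : ∀ f ∈ F, ∀ᶠ n in atTop, n ∈ T → f n ≤ g n) : EventuallyBounded F := by
  choose t ht using fun k => hT.exists_gt k
  refine ⟨g ∘ t, fun f hf => ?_⟩
  obtain ⟨N, hN⟩ := eventually_atTop.1 (hle f hf)
  filter_upwards [eventually_ge_atTop N] with k hk
  calc f k ≤ f (t k) := hmono f hf (ht k).2.le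
    _ ≤ g (t k) := hN _ (hk.trans (ht k).2.le) (ht k).1

lemma bNum_mem : bNum ∈ {c | ∃ F : Set (ℕ → ℕ), #F = c ∧ ¬ EventuallyBounded F} :=
  csInf_mem ⟨_, univ, rfl, not_eventuallyBounded_univ⟩

lemma bNum_le_mk_of_not_eventuallyBounded {F : Set (ℕ → ℕ)} (hF : ¬ EventuallyBounded F) :
    bNum ≤ #F :=
  csInf_le' ⟨F, rfl, hF⟩

lemma aleph0_le_bNum : ℵ₀ ≤ bNum := by
  obtain ⟨F, hc, hF⟩ := bNum_mem
  rw [← hc]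
  by_contra hlt
  exact hF (eventuallyBounded_of_finite (lt_aleph0_iff_set_finite.mp (not_le.mp hlt)))

lemma exists_monotone_not_eventuallyBounded :
    ∃ F : Set (ℕ → ℕ), #F ≤ bNum ∧ (∀ f ∈ F, Monotone f) ∧ ¬ EventuallyBounded F := by
  obtain ⟨F, hc, hF⟩ := bNum_mem
  refine ⟨(fun f => ⇑(partialSups f)) '' F, hc ▸ mk_image_le, ?_, ?_⟩
  · rintro _ ⟨f, -, rfl⟩
    exact (partialSups f).monotone
  · rintro ⟨g, hg⟩
    exact hF ⟨g, fun f hf => (hg _ ⟨f, hf, rfl⟩).mono fun n hn => (le_partialSups f n).trans hn⟩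

lemma semiTauDiag_of_eventually_eq_true {𝒜 : Set Arr} (g : ℕ → ℕ)
    (h : ∀ A ∈ 𝒜, ∀ᶠ n in atTop, A (n, g n) = true) : SemiTauDiag 𝒜 :=
  ⟨univ, g, fun A hA => ((h A hA).mono fun _ hn => ⟨mem_univ _, hn⟩).frequently,
    fun _ _ B hB => .inl <| (h B hB).mono fun _ hn _ => hn ▸ Bool.le_true _⟩

lemma bNum_le_mk_of_not_semiTauDiag {𝒜 : Set Arr} (hγ : GammaFamily 𝒜)
    (hns : ¬ SemiTauDiag 𝒜) : bNum ≤ #𝒜 := by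
  choose v hv using fun (A : 𝒜) n => eventually_atTop.1 (hγ A A.2 n)
  refine (bNum_le_mk_of_not_eventuallyBounded (F := range v) ?_).trans mk_range_le
  rintro ⟨g, hg⟩
  exact hns <| semiTauDiag_of_eventually_eq_true g fun A hA =>
    (hg _ ⟨⟨A, hA⟩, rfl⟩).mono fun n hn => hv _ n _ hn

def window (x y : ℕ → ℕ) : Arr := fun p => !decide (x p.1 ≤ p.2 ∧ p.2 < y p.1)

@[simp]
lemma window_eq_false_iff {x y : ℕ → ℕ} {n m : ℕ} :
    window x y (n, m) = false ↔ x n ≤ m ∧ m < y n := by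
  simp [window]

@[simp]
lemma window_eq_true_iff {x y : ℕ → ℕ} {n m : ℕ} :
    window x y (n, m) = true ↔ m < x n ∨ y n ≤ m := by
  simp [window]

lemma isGammaArray_window (x y : ℕ → ℕ) : IsGammaArray (window x y) := fun n =>
  eventually_atTop.2 ⟨y n, fun _ hm => window_eq_true_iff.2 (.inr hm)⟩

/-- `window 0 y` is the array whose `n`-th row switches to 1 at `y n`. -/
def windowFamily (F : Set (ℕ → ℕ)) : Set Arr := image2 window (insert 0 F) F

lemma gammaFamily_windowFamily (F : Set (ℕ → ℕ)) : GammaFamily (windowFamily F) := by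
  rintro _ ⟨x, -, y, -, rfl⟩
  exact isGammaArray_window x y

lemma mk_windowFamily_le {F : Set (ℕ → ℕ)} (hF : #F ≤ bNum) : #(windowFamily F) ≤ bNum :=
  calc #(windowFamily F) ≤ #(insert 0 F : Set (ℕ → ℕ)) * #F := mk_image2_le
    _ ≤ bNum * bNum :=
      mul_le_mul' (mk_insert_le.trans ((add_le_add hF le_rfl).trans_eq
        (add_one_eq aleph0_le_bNum))) hF
    _ = bNum := mul_eq_self aleph0_le_bNum

section Diagonalizer

variable {D : Set ℕ} {g : ℕ → ℕ}

lemma not_eventually_le_of_frequently {A B : Arr}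
    (h : ∃ᶠ n in atTop, n ∈ D ∧ A (n, g n) = true ∧ B (n, g n) = false) :
    ¬ ∀ᶠ n in atTop, n ∈ D → A (n, g n) ≤ B (n, g n) := fun hle =>
  (h.and_eventually hle).exists.elim fun n ⟨⟨hD, hA, hB⟩, hAB⟩ => by
    have h := hAB hD
    rw [hA, hB] at h
    exact absurd h (by decide)

lemma not_comparable_window_of_frequently {x ρ σ : ℕ → ℕ}
    (hxρ : ∃ᶠ n in atTop, n ∈ D ∧ x n ≤ g n ∧ g n < ρ n)
    (hρσ : ∃ᶠ n in atTop, n ∈ D ∧ ρ n ≤ g n ∧ g n < σ n) :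
    ¬ ((∀ᶠ n in atTop, n ∈ D → window x ρ (n, g n) ≤ window ρ σ (n, g n)) ∨
      (∀ᶠ n in atTop, n ∈ D → window ρ σ (n, g n) ≤ window x ρ (n, g n))) := by
  rintro (h | h) <;> refine not_eventually_le_of_frequently ?_ h
  · exact hρσ.mono fun _ ⟨hD, h₁, h₂⟩ =>
      ⟨hD, window_eq_true_iff.2 (.inr h₁), window_eq_false_iff.2 ⟨h₁, h₂⟩⟩
  · exact hxρ.mono fun _ ⟨hD, h₁, h₂⟩ =>
      ⟨hD, window_eq_true_iff.2 (.inl h₂), window_eq_false_iff.2 ⟨h₁, h₂⟩⟩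

lemma exists_forall_eventually_le_of_windowFamily_comparable {F : Set (ℕ → ℕ)} (hne : F.Nonempty)
    (hcomp : ∀ A ∈ windowFamily F, ∀ B ∈ windowFamily F,
      (∀ᶠ n in atTop, n ∈ D → A (n, g n) ≤ B (n, g n)) ∨
      (∀ᶠ n in atTop, n ∈ D → B (n, g n) ≤ A (n, g n))) :
    ∃ ρ ∈ F, ∀ σ ∈ F, ∀ᶠ n in atTop, n ∈ D → ρ n ≤ g n → σ n ≤ g n := by
  by_cases hhit : ∃ x ∈ insert 0 F, ∃ ρ ∈ F, ∃ᶠ n in atTop, n ∈ D ∧ x n ≤ g n ∧ g n < ρ n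
  · obtain ⟨x, hx, ρ, hρ, hxρ⟩ := hhit
    refine ⟨ρ, hρ, fun σ hσ => by_contra fun hρσ => ?_⟩
    refine not_comparable_window_of_frequently hxρ ?_
      (hcomp _ (mem_image2_of_mem hx hρ) _ (mem_image2_of_mem (mem_insert_of_mem 0 hρ) hσ))
    exact (not_eventually.1 hρσ).mono fun n hn => by push Not at hn; exact hn
  · push Not at hhit
    obtain ⟨ρ, hρ⟩ := hne
    exact ⟨ρ, hρ, fun σ hσ => hhit ρ (mem_insert_of_mem 0 hρ) σ hσ⟩

end Diagonalizer

lemma not_semiTauDiag_windowFamily {F : Set (ℕ → ℕ)} (hmono : ∀ f ∈ F, Monotone f)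
    (hF : ¬ EventuallyBounded F) : ¬ SemiTauDiag (windowFamily F) := by
  rintro ⟨D, g, hhit, hcomp⟩
  have hne : F.Nonempty :=
    nonempty_iff_ne_empty.2 fun h => hF (h ▸ eventuallyBounded_of_finite finite_empty)
  obtain ⟨ρ, hρ, hle⟩ := exists_forall_eventually_le_of_windowFamily_comparable hne hcomp
  have hT : {n | n ∈ D ∧ ρ n ≤ g n}.Infinite := Nat.frequently_atTop_iff_infinite.1 <|
    (hhit _ (mem_image2_of_mem (mem_insert 0 F) hρ)).mono fun n ⟨hD, h⟩ => ⟨hD, by simpa using h⟩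
  exact hF (eventuallyBounded_of_eventually_le_on hmono hT fun σ hσ =>
    (hle σ hσ).mono fun n h hn => h hn.1 hn.2)

/-- The minimal cardinality of a γ-family which is not semi τ-diagonalizable
is equal to the bounding number 𝔟. -/
theorem stmt1 :
    sInf {c | ∃ 𝒜 : Set Arr, Cardinal.mk 𝒜 = c ∧ GammaFamily 𝒜 ∧ ¬ SemiTauDiag 𝒜} = bNum := by
  obtain ⟨F, hcard, hmono, hF⟩ := exists_monotone_not_eventuallyBounded
  have hbad : #(windowFamily F) ∈
      {c | ∃ 𝒜 : Set Arr, Cardinal.mk 𝒜 = c ∧ GammaFamily 𝒜 ∧ ¬ SemiTauDiag 𝒜} :=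
    ⟨_, rfl, gammaFamily_windowFamily F, not_semiTauDiag_windowFamily hmono hF⟩
  refine le_antisymm ((csInf_le' hbad).trans (mk_windowFamily_le hcard)) (le_csInf ⟨_, hbad⟩ ?_)
  rintro _ ⟨𝒜, rfl, hγ, hns⟩
  exact bNum_le_mk_of_not_semiTauDiag hγ hns
end
end

section
/- For a space X, the following are equivalent: (1) X satisfies Sfin(C_Γ, C_Τ); (2) for every continuous function Ψ : X → 2^(ℕ×ℕ), if the image Ψ[X] is a γ-family, then Ψ[X] is finitely τ-diagonalizable. -/
open Set Filter Cardinal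
open scoped Classical

noncomputable section

/-!
Write `U n m` for the clopen set on which the `(n, m)` entry of `Ψ` is `1`. Continuous arrays are
the arrays of clopen sets, in a γ-family every row is a γ-cover (or contains the whole space), and
finite sets `G n` τ-diagonalize the family iff `⋃ₙ {U n m | m ∈ G n}` is a τ-cover, provided every
set occurs in only finitely many rows (for one implication) or in only one row (for the other).

(1) ⇒ (2): if infinitely many rows contain the whole space, selecting it diagonalizes trivially;
otherwise the rows are eventually clopen γ-covers, `Sfin` selects a τ-cover from them, and keeping
each selected set only in the first row that selects it makes the rows disjoint.

(2) ⇒ (1): if some cover has infinitely many members that recur in infinitely many covers, they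
can be distributed finitely over the covers and form a τ-cover, being an infinite subfamily of a
γ-cover. Otherwise the non-recurring members of the covers, enumerated injectively, form the rows
of a γ-array of clopen sets, and a finite τ-diagonalization of it selects the τ-cover.
-/

variable {α : Type*}

theorem GammaCover.tauCover_of_subset {𝒰 𝒱 : Set (Set α)} (h : GammaCover α 𝒰) (hsub : 𝒱 ⊆ 𝒰)
    (hinf : 𝒱.Infinite) : TauCover α 𝒱 := by
  obtain ⟨⟨hcount, -, huniv⟩, -, hγ⟩ := h
  have hmem : ∀ x, {V | V ∈ 𝒱 ∧ x ∈ V}.Infinite := fun x =>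
    (hinf.sdiff (hγ x)).mono fun V hV => ⟨hV.1, by_contra fun hx => hV.2 ⟨hsub hV.1, hx⟩⟩
  refine ⟨⟨hcount.mono hsub, ?_, fun h => huniv (hsub h)⟩, hmem, fun x y => ?_⟩
  · refine eq_univ_of_forall fun x => ?_
    obtain ⟨V, hV, hxV⟩ := (hmem x).nonempty
    exact ⟨V, hV, hxV⟩
  · exact Or.inl <| (hγ y).subset fun U hU => ⟨hsub hU.1, hU.2.2⟩

theorem KGamma.kTau_of_subset [TopologicalSpace α] {𝒰 𝒱 : Set (Set α)} (h : KGamma α 𝒰)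
    (hsub : 𝒱 ⊆ 𝒰) (hinf : 𝒱.Infinite) : KTau α 𝒱 :=
  ⟨h.1.tauCover_of_subset hsub hinf, fun V hV => h.2 V (hsub hV)⟩

theorem kGamma_range [TopologicalSpace α] {u : ℕ → Set α} (hclopen : ∀ m, IsClopen (u m))
    (hγ : ∀ x, ∀ᶠ m in atTop, x ∈ u m) (huniv : ∀ m, u m ≠ Set.univ) : KGamma α (range u) := by
  have hcofinite : ∀ x, {m | x ∉ u m}.Finite := fun x => by
    simpa [← Nat.cofinite_eq_atTop] using hγ x
  refine ⟨⟨⟨countable_range u, ?_, fun ⟨m, hm⟩ => huniv m hm⟩, fun hfin => ?_, fun x => ?_⟩, ?_⟩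
  · refine eq_univ_of_forall fun x => ?_
    obtain ⟨m, hm⟩ := (hγ x).exists
    exact ⟨u m, mem_range_self m, hm⟩
  · -- A point outside each of the finitely many members would eventually lie in all of them.
    have hout : ∀ W ∈ range u, ∃ x, x ∉ W := by
      rintro _ ⟨m, rfl⟩
      simpa [eq_univ_iff_forall] using huniv m
    have : Nonempty α := let ⟨x, _⟩ := hout _ (mem_range_self 0); ⟨x⟩
    choose! p hp using hout
    obtain ⟨m, hm⟩ := ((eventually_all_finite hfin).2 fun W _ => hγ (p W)).exists
    exact hp (u m) (mem_range_self m) (hm _ (mem_range_self m))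
  · exact ((hcofinite x).image u).subset <| by
      rintro _ ⟨⟨m, rfl⟩, hxW⟩
      exact ⟨m, hxW, rfl⟩
  · rintro _ ⟨m, rfl⟩
    exact hclopen m

theorem exists_finset_image_eq {β γ : Type*} {f : β → γ} {s : Set γ} (hs : s.Finite)
    (hsub : s ⊆ range f) : ∃ t : Finset β, f '' t = s := by
  classical
  obtain ⟨t, -, ht⟩ := Finset.subset_set_image_iff.1 (show ↑hs.toFinset ⊆ f '' univ by simpa)
  exact ⟨t, by simpa using congrArg ((↑) : Finset γ → Set γ) ht⟩

theorem exists_finite_subsets_iUnion_eq {β : Type*} {𝒰 : ℕ → Set β} {𝒱 : Set β}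
    (hcount : 𝒱.Countable) (hrec : ∀ v ∈ 𝒱, {n | v ∈ 𝒰 n}.Infinite) :
    ∃ F : ℕ → Set β, (∀ n, (F n).Finite ∧ F n ⊆ 𝒰 n) ∧ ⋃ n, F n = 𝒱 := by
  rcases 𝒱.eq_empty_or_nonempty with rfl | hne
  · exact ⟨fun _ => ∅, fun _ => ⟨finite_empty, empty_subset _⟩, iUnion_empty⟩
  obtain ⟨e, rfl⟩ := hcount.exists_eq_range hne
  -- The `k`-th element goes into a cover of index above `k`, so each cover receives finitely many.
  choose t hmem hkt using fun k => (hrec (e k) (mem_range_self k)).exists_gt k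
  refine ⟨fun n => e '' {k | t k = n}, fun n => ⟨?_, ?_⟩, ?_⟩
  · exact ((finite_Iic n).subset fun k (hk : t k = n) => (hk ▸ hkt k).le).image e
  · rintro _ ⟨k, rfl, rfl⟩
    exact hmem k
  · ext v
    simp only [mem_iUnion, mem_image, mem_ofPred_eq, mem_range]
    exact ⟨fun ⟨_, k, _, hk⟩ => ⟨k, hk⟩, fun ⟨k, hk⟩ => ⟨t k, k, rfl, hk⟩⟩

def arrOfSets (U : ℕ → ℕ → Set α) (x : α) : Arr := fun p => (U p.1 p.2).boolIndicator x

def IsTauSelection (U : ℕ → ℕ → Set α) (G : ℕ → Finset ℕ) : Prop :=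
  (∀ x, ∃ᶠ n in atTop, ∃ m ∈ G n, x ∈ U n m) ∧
    ∀ x y, (∀ᶠ n in atTop, ∀ m ∈ G n, x ∈ U n m → y ∈ U n m) ∨
      (∀ᶠ n in atTop, ∀ m ∈ G n, y ∈ U n m → x ∈ U n m)

def selectedSets (U : ℕ → ℕ → Set α) (G : ℕ → Finset ℕ) : Set (Set α) := ⋃ n, U n '' G n

def RowsDisjoint (U : ℕ → ℕ → Set α) (G : ℕ → Finset ℕ) : Prop :=
  ∀ n n', ∀ m ∈ G n, ∀ m' ∈ G n', U n m = U n' m' → n = n'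

section Arrays

variable {U : ℕ → ℕ → Set α}

theorem mem_arrOfSets {x : α} {n m : ℕ} : arrOfSets U x (n, m) = true ↔ x ∈ U n m :=
  (mem_iff_boolIndicator _ _).symm

theorem arrOfSets_setOf (Ψ : α → Arr) : arrOfSets (fun n m => {x | Ψ x (n, m) = true}) = Ψ := by
  funext x p
  cases h : Ψ x p <;> simp [arrOfSets, boolIndicator, h]

theorem continuous_arrOfSets_iff [TopologicalSpace α] :
    Continuous (arrOfSets U) ↔ ∀ n m, IsClopen (U n m) := by
  simp only [continuous_pi_iff, Prod.forall, arrOfSets, continuous_boolIndicator_iff_isClopen]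

theorem gammaFamily_range_arrOfSets_iff :
    GammaFamily (range (arrOfSets U)) ↔ ∀ x n, ∀ᶠ m in atTop, x ∈ U n m := by
  simp only [GammaFamily, IsGammaArray, forall_mem_range, mem_arrOfSets]

theorem finTauDiag_range_arrOfSets_iff :
    FinTauDiag (range (arrOfSets U)) ↔ ∃ G, IsTauSelection U G := by
  simp only [FinTauDiag, IsTauSelection, forall_mem_range, Bool.le_iff_imp, mem_arrOfSets]

theorem forall_finTauDiag_iff [TopologicalSpace α] :
    (∀ Ψ : α → Arr, Continuous Ψ → GammaFamily (range Ψ) → FinTauDiag (range Ψ)) ↔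
      ∀ U : ℕ → ℕ → Set α, (∀ n m, IsClopen (U n m)) → (∀ x n, ∀ᶠ m in atTop, x ∈ U n m) →
        ∃ G, IsTauSelection U G := by
  refine ⟨fun h U hclopen hγ => ?_, fun h Ψ hΨ hγ => ?_⟩
  · rw [← finTauDiag_range_arrOfSets_iff]
    exact h _ (continuous_arrOfSets_iff.2 hclopen) (gammaFamily_range_arrOfSets_iff.2 hγ)
  · rw [← arrOfSets_setOf Ψ] at hΨ hγ ⊢
    exact finTauDiag_range_arrOfSets_iff.2
      (h _ (continuous_arrOfSets_iff.1 hΨ) (gammaFamily_range_arrOfSets_iff.1 hγ))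

end Arrays

section Selection

variable {U : ℕ → ℕ → Set α} {G : ℕ → Finset ℕ}

theorem mem_selectedSets {W : Set α} : W ∈ selectedSets U G ↔ ∃ n, ∃ m ∈ G n, U n m = W := by
  simp [selectedSets]

theorem countable_selectedSets : (selectedSets U G).Countable :=
  countable_iUnion fun n => ((G n).finite_toSet.image _).countable

theorem finite_selectedSets_of_eventually {P : Set α → Prop}
    (h : ∀ᶠ n in atTop, ∀ m ∈ G n, ¬ P (U n m)) : {W | W ∈ selectedSets U G ∧ P W}.Finite := by
  rw [← Nat.cofinite_eq_atTop, eventually_cofinite] at h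
  refine (h.biUnion fun n _ => (G n).finite_toSet.image (U n)).subset ?_
  rintro _ ⟨hW, hP⟩
  obtain ⟨n, m, hm, rfl⟩ := mem_selectedSets.1 hW
  exact mem_biUnion (fun h' => h' m hm hP) ⟨m, hm, rfl⟩

theorem eventually_of_finite_selectedSets
    (hdisj : RowsDisjoint U G) {P : Set α → Prop}
    (h : {W | W ∈ selectedSets U G ∧ P W}.Finite) : ∀ᶠ n in atTop, ∀ m ∈ G n, ¬ P (U n m) := by
  rw [← Nat.cofinite_eq_atTop, eventually_cofinite]
  have hsub : ∀ W, {n | ∃ m ∈ G n, U n m = W}.Subsingleton := by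
    rintro W n ⟨m, hm, rfl⟩ n' ⟨m', hm', h'⟩
    exact hdisj n n' m hm m' hm' h'.symm
  refine (h.biUnion fun W _ => (hsub W).finite).subset fun n hn => ?_
  push Not at hn
  obtain ⟨m, hm, hP⟩ := hn
  exact mem_biUnion ⟨mem_selectedSets.2 ⟨n, m, hm, rfl⟩, hP⟩ ⟨m, hm, rfl⟩

theorem exists_rowsDisjoint_selectedSets_eq (U : ℕ → ℕ → Set α) (G₀ : ℕ → Finset ℕ) :
    ∃ G : ℕ → Finset ℕ, selectedSets U G = selectedSets U G₀ ∧ RowsDisjoint U G := by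
  let G : ℕ → Finset ℕ := fun n => (G₀ n).filter fun m => ∀ k < n, U n m ∉ U k '' G₀ k
  refine ⟨G, ?_, ?_⟩
  · refine Subset.antisymm
      (iUnion_mono fun n => image_mono (Finset.coe_subset.2 (Finset.filter_subset _ _)))
      fun W hW => ?_
    have hex : ∃ n, ∃ m ∈ G₀ n, U n m = W := mem_selectedSets.1 hW
    obtain ⟨m, hm, hmW⟩ := Nat.find_spec hex
    refine mem_selectedSets.2 ⟨Nat.find hex, m, Finset.mem_filter.2 ⟨hm, ?_⟩, hmW⟩
    rintro k hk ⟨m', hm', h'⟩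
    exact Nat.find_min hex hk ⟨m', hm', h'.trans hmW⟩
  · have hle : ∀ n n', ∀ m ∈ G n, ∀ m' ∈ G n', U n m = U n' m' → n' ≤ n :=
      fun n n' m hm m' hm' heq => not_lt.1 fun hlt =>
        (Finset.mem_filter.1 hm').2 n hlt ⟨m, (Finset.mem_filter.1 hm).1, heq⟩
    exact fun n n' m hm m' hm' heq =>
      le_antisymm (hle n' n m' hm' m hm heq.symm) (hle n n' m hm m' hm' heq)

theorem IsTauSelection.tauCover (h : IsTauSelection U G)
    (hrows : ∀ n m, {k | U n m ∈ range (U k)}.Finite)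
    (huniv : ∀ n, ∀ m ∈ G n, U n m ≠ Set.univ) : TauCover α (selectedSets U G) := by
  have hmem : ∀ x, {W | W ∈ selectedSets U G ∧ x ∈ W}.Infinite := by
    intro x hfin
    -- Each selected set lies in finitely many rows, but `x` is caught in infinitely many rows.
    have hrows_fin : (⋃ W ∈ {W | W ∈ selectedSets U G ∧ x ∈ W}, {k | W ∈ range (U k)}).Finite :=
      hfin.biUnion fun W hW => by
        obtain ⟨n, m, -, rfl⟩ := mem_selectedSets.1 hW.1
        exact hrows n m
    obtain ⟨n, ⟨m, hm, hx⟩, hn⟩ :=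
      ((Nat.frequently_atTop_iff_infinite.1 (h.1 x)).sdiff hrows_fin).nonempty
    exact hn (mem_biUnion ⟨mem_selectedSets.2 ⟨n, m, hm, rfl⟩, hx⟩ ⟨m, rfl⟩)
  refine ⟨⟨countable_selectedSets, eq_univ_of_forall fun x => ?_, fun hu => ?_⟩, hmem,
    fun x y => ?_⟩
  · obtain ⟨W, hW, hx⟩ := (hmem x).nonempty
    exact ⟨W, hW, hx⟩
  · obtain ⟨n, m, hm, hW⟩ := mem_selectedSets.1 hu
    exact huniv n m hm hW
  · refine (h.2 x y).imp (fun hxy => ?_) fun hyx => ?_ <;>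
      refine finite_selectedSets_of_eventually (Eventually.mono ‹_› fun n hn m hm hP => ?_)
    exacts [hP.2 (hn m hm hP.1), hP.2 (hn m hm hP.1)]

theorem isTauSelection_of_tauCover
    (hdisj : RowsDisjoint U G)
    (h : TauCover α (selectedSets U G)) : IsTauSelection U G := by
  refine ⟨fun x => ?_, fun x y => (h.2.2 x y).imp (fun hfin => ?_) fun hfin => ?_⟩
  · by_contra hx
    refine h.2.1 x (finite_selectedSets_of_eventually ?_)
    exact (not_frequently.1 hx).mono fun n hn m hm hxm => hn ⟨m, hm, hxm⟩
  all_goals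
    exact (eventually_of_finite_selectedSets hdisj hfin).mono
      fun n hn m hm hx => by_contra fun hy => hn m hm ⟨hx, hy⟩

theorem IsTauSelection.congr {V : ℕ → ℕ → Set α} (h : IsTauSelection U G)
    (hUV : ∀ᶠ n in atTop, U n = V n) : IsTauSelection V G := by
  refine ⟨fun x => (h.1 x).mp (hUV.mono fun n hn => hn ▸ id), fun x y => ?_⟩
  exact (h.2 x y).imp (fun h' => (h'.and hUV).mono fun n hn => hn.2 ▸ hn.1)
    fun h' => (h'.and hUV).mono fun n hn => hn.2 ▸ hn.1

theorem exists_isTauSelection_of_frequently_univ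
    (h : ∃ᶠ n in atTop, Set.univ ∈ range (U n)) : ∃ G, IsTauSelection U G := by
  have hrow : ∀ n, ∃ s : Finset ℕ, (∀ m ∈ s, U n m = Set.univ) ∧
      (Set.univ ∈ range (U n) → s.Nonempty) := by
    intro n
    by_cases hn : Set.univ ∈ range (U n)
    · obtain ⟨m, hm⟩ := hn
      exact ⟨{m}, by simpa using hm, fun _ => Finset.singleton_nonempty m⟩
    · exact ⟨∅, by simp, fun h => absurd h hn⟩
  choose G hG hne using hrow
  refine ⟨G, fun x => h.mono fun n hn => ?_, fun x y => Or.inl (.of_forall fun n m hm _ => ?_)⟩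
  · obtain ⟨m, hm⟩ := hne n hn
    exact ⟨m, hm, hG n m hm ▸ mem_univ x⟩
  · exact hG n m hm ▸ mem_univ y

end Selection

section Equivalence

variable [TopologicalSpace α]

theorem SFin.exists_isTauSelection_of_ne_univ (hS : SFin α (KGamma α) (KTau α))
    {U : ℕ → ℕ → Set α} (hclopen : ∀ n m, IsClopen (U n m))
    (hγ : ∀ x n, ∀ᶠ m in atTop, x ∈ U n m) (huniv : ∀ n m, U n m ≠ Set.univ) :
    ∃ G, IsTauSelection U G := by
  obtain ⟨F, hF, hτ⟩ := hS _ fun n => kGamma_range (hclopen n) (hγ · n) (huniv n)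
  choose G₀ hG₀ using fun n => exists_finset_image_eq (hF n).1 (hF n).2
  obtain ⟨G, hsel, hdisj⟩ := exists_rowsDisjoint_selectedSets_eq U G₀
  refine ⟨G, isTauSelection_of_tauCover hdisj ?_⟩
  rw [hsel, selectedSets]
  simpa only [hG₀] using hτ.1

theorem SFin.exists_isTauSelection (hS : SFin α (KGamma α) (KTau α))
    {U : ℕ → ℕ → Set α} (hclopen : ∀ n m, IsClopen (U n m))
    (hγ : ∀ x n, ∀ᶠ m in atTop, x ∈ U n m) : ∃ G, IsTauSelection U G := by
  by_cases h : ∃ᶠ n in atTop, Set.univ ∈ range (U n)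
  · exact exists_isTauSelection_of_frequently_univ h
  obtain ⟨N, hN⟩ := eventually_atTop.1 (not_frequently.1 h)
  -- Replacing the rows before `N` by row `N` does not affect τ-selections.
  obtain ⟨G, hG⟩ := hS.exists_isTauSelection_of_ne_univ (U := fun n => U (max n N))
    (fun n => hclopen _) (fun x n => hγ x _) fun n m hm => hN _ (le_max_right n N) ⟨m, hm⟩
  exact ⟨G, hG.congr ((eventually_ge_atTop N).mono fun n hn => by rw [max_eq_left hn])⟩

theorem exists_kTau_of_finite_recurring
    (h : ∀ U : ℕ → ℕ → Set α, (∀ n m, IsClopen (U n m)) → (∀ x n, ∀ᶠ m in atTop, x ∈ U n m) →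
      ∃ G, IsTauSelection U G)
    {𝒰 : ℕ → Set (Set α)} (h𝒰 : ∀ n, KGamma α (𝒰 n))
    (hfin : ∀ n, ({V | {k | V ∈ 𝒰 k}.Infinite} ∩ 𝒰 n).Finite) :
    ∃ F : ℕ → Set (Set α), (∀ n, (F n).Finite ∧ F n ⊆ 𝒰 n) ∧ KTau α (⋃ n, F n) := by
  have hinf : ∀ n, (𝒰 n \ {V | {k | V ∈ 𝒰 k}.Infinite}).Infinite := fun n => by
    simpa only [sdiff_inter_self_eq_sdiff] using (h𝒰 n).1.2.1.sdiff (hfin n)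
  set U : ℕ → ℕ → Set α := fun n m => (hinf n).natEmbedding _ m
  have hU : ∀ n m, U n m ∈ 𝒰 n ∧ {k | U n m ∈ 𝒰 k}.Finite := fun n m =>
    ⟨((hinf n).natEmbedding _ m).2.1, Set.not_infinite.1 ((hinf n).natEmbedding _ m).2.2⟩
  have hinj : ∀ n, Function.Injective (U n) := fun n =>
    Subtype.val_injective.comp ((hinf n).natEmbedding _).injective
  obtain ⟨G, hG⟩ := h U (fun n m => (h𝒰 n).2 _ (hU n m).1) fun x n => by
    rw [← Nat.cofinite_eq_atTop, eventually_cofinite]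
    exact (((h𝒰 n).1.2.2 x).preimage (hinj n).injOn).subset fun m hm => ⟨(hU n m).1, hm⟩
  refine ⟨fun n => U n '' G n,
    fun n => ⟨(G n).finite_toSet.image _, image_subset_iff.2 fun m _ => (hU n m).1⟩, ?_, ?_⟩
  · refine hG.tauCover (fun n m => (hU n m).2.subset ?_) fun n m _ hm => ?_
    · rintro k ⟨m', hm'⟩
      exact hm' ▸ (hU k m').1
    · exact (h𝒰 n).1.1.2.2 (hm ▸ (hU n m).1)
  · intro W hW
    obtain ⟨n, m, -, rfl⟩ := mem_selectedSets.1 hW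
    exact (h𝒰 n).2 _ (hU n m).1

theorem sFin_of_forall_exists_isTauSelection
    (h : ∀ U : ℕ → ℕ → Set α, (∀ n m, IsClopen (U n m)) → (∀ x n, ∀ᶠ m in atTop, x ∈ U n m) →
      ∃ G, IsTauSelection U G) :
    SFin α (KGamma α) (KTau α) := by
  intro 𝒰 h𝒰
  by_cases hrec : ∃ n₀, ({V | {k | V ∈ 𝒰 k}.Infinite} ∩ 𝒰 n₀).Infinite
  · -- Infinitely many members of one cover recur infinitely often: spread them over the covers.
    obtain ⟨n₀, hn₀⟩ := hrec
    obtain ⟨F, hF, hFU⟩ :=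
      exists_finite_subsets_iUnion_eq ((h𝒰 n₀).1.1.1.mono inter_subset_right) fun V hV => hV.1
    exact ⟨F, hF, hFU ▸ (h𝒰 n₀).kTau_of_subset inter_subset_right hn₀⟩
  · exact exists_kTau_of_finite_recurring h h𝒰 fun n => Set.not_infinite.1 (not_exists.1 hrec n)

theorem sFin_kGamma_kTau_iff :
    SFin α (KGamma α) (KTau α) ↔
      ∀ Ψ : α → Arr, Continuous Ψ → GammaFamily (range Ψ) → FinTauDiag (range Ψ) := by
  rw [forall_finTauDiag_iff]
  exact ⟨fun hS _ => hS.exists_isTauSelection, sFin_of_forall_exists_isTauSelection⟩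

end Equivalence

theorem stmt2_general (X : Set Cantor) :
    SFin ↥X (KGamma ↥X) (KTau ↥X) ↔
      ∀ Ψ : ↥X → Arr, Continuous Ψ → GammaFamily (range Ψ) → FinTauDiag (range Ψ) :=
  sFin_kGamma_kTau_iff

/-- A space satisfies Sfin(C_Γ,C_Τ) iff every continuous image in `2^(ℕ×ℕ)`
which is a γ-family is finitely τ-diagonalizable. -/
theorem stmt2 (X : Set Cantor) (hX : X.Infinite) :
    SFin ↥X (KGamma ↥X) (KTau ↥X) ↔
      ∀ Ψ : ↥X → Arr, Continuous Ψ → GammaFamily (range Ψ) → FinTauDiag (range Ψ) :=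
  stmt2_general X

end
end

section
/- If the square X × X (with the product topology) satisfies Sfin(Γ,Τ), then X satisfies Ufin(O,Γ). -/
open Set Filter Cardinal
open scoped Classical

noncomputable section

/-!
Fix `y₀ ∈ X`. As `X` is zero-dimensional and Lindelöf, each open cover `U n` without a finite
subcover is exhausted by an increasing sequence of proper clopen sets `V n m ∋ y₀`, each covered by
finitely many members of `U n`. The sets `{(a, b) | b ∈ V n m → a ∈ V n m}` then form open γ-covers
of `X × X`. Since membership of `(a, b)` is determined by that of `(a, y₀)` and `(b, y₀)`, the
τ-cover that Sfin(Γ,Τ) selects from them contains an infinite subfamily which is a γ-cover at the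
points `(x, y₀)`, i.e. whose sets `V n m` form a γ-cover of `X`. Taking one such `V n m` for
infinitely many stages `n` gives the Ufin selection.
-/

open TopologicalSpace Topology

section GammaCover

variable {α : Type*}

lemma gammaCover_range {G : ℕ → Set α} {N : Set ℕ} (hN : N.Infinite)
    (hoff : ∀ n ∉ N, G n = ∅) (hne : ∀ n, G n ≠ Set.univ)
    (hfin : ∀ x, {n | n ∈ N ∧ x ∉ G n}.Finite) :
    GammaCover α (range G) := by
  have hbad : ∀ x, {S | S ∈ range G ∧ x ∉ S} ⊆ insert ∅ (G '' {n | n ∈ N ∧ x ∉ G n}) := by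
    rintro x _ ⟨⟨n, rfl⟩, hx⟩
    by_cases hn : n ∈ N
    · exact mem_insert_of_mem _ ⟨n, ⟨hn, hx⟩, rfl⟩
    · exact hoff n hn ▸ mem_insert _ _
  refine ⟨⟨countable_range G, eq_univ_of_forall fun x => ?_, fun ⟨n, hn⟩ => hne n hn⟩,
    fun hfinR => ?_, fun x => (((hfin x).image G).insert ∅).subset (hbad x)⟩
  · obtain ⟨n, hn, hx⟩ := (hN.sdiff (hfin x)).nonempty
    exact ⟨G n, mem_range_self n, not_not.1 fun hx' => hx ⟨hn, hx'⟩⟩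
  · -- every `n ∈ N` is bad for one of the finitely many points `pt S`, `S ∈ range G`
    have : Nonempty α := ⟨((ne_univ_iff_exists_notMem _).1 (hne 0)).choose⟩
    choose! pt hpt using fun S (hS : S ∈ range G) =>
      (ne_univ_iff_exists_notMem S).1 fun h => hne _ (hS.choose_spec.trans h)
    refine hN ((hfinR.biUnion fun S _ => hfin (pt S)).subset fun n hn => ?_)
    exact mem_biUnion (mem_range_self n) ⟨hn, hpt _ (mem_range_self n)⟩

end GammaCover

lemma exists_injOn_of_infinite_subset_iUnion {β : Type*} {F : ℕ → Set β}
    (hF : ∀ n, (F n).Finite) {P : Set β} (hP : P.Infinite) (hPF : P ⊆ ⋃ n, F n) :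
    ∃ (N : Set ℕ) (w : ℕ → β), N.Infinite ∧ InjOn w N ∧ ∀ n ∈ N, w n ∈ P ∧ w n ∈ F n := by
  have : Nonempty β := ⟨hP.nonempty.some⟩
  choose! stage hstage using fun W (hW : W ∈ P) => mem_iUnion.1 (hPF hW)
  refine ⟨stage '' P, Function.invFunOn stage P, fun hfin => hP ?_, ?_, ?_⟩
  · exact ((hfin.biUnion fun n _ => hF n).subset fun W hW =>
      mem_biUnion (mem_image_of_mem stage hW) (hstage W hW))
  · intro n hn n' hn' h
    rw [← Function.invFunOn_eq hn, ← Function.invFunOn_eq hn', h]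
  · intro n hn
    have hmem := Function.invFunOn_mem hn
    refine ⟨hmem, ?_⟩
    have := hstage _ hmem
    rwa [Function.invFunOn_eq hn] at this

section ImpRel

variable {α : Type*}

def impRel (V : Set α) : Set (α × α) := {p | p.2 ∈ V → p.1 ∈ V}

lemma mem_impRel_base {V : Set α} {y₀ : α} (hy₀ : y₀ ∈ V) (x : α) :
    (x, y₀) ∈ impRel V ↔ x ∈ V := by
  simp [impRel, hy₀]

lemma isOpen_impRel [TopologicalSpace α] {V : Set α} (hV : IsClopen V) : IsOpen (impRel V) := by
  have : impRel V = (Vᶜ ×ˢ V)ᶜ := by ext; simp [impRel, not_imp_not]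
  exact this ▸ (hV.compl.isClosed.prod hV.isClosed).isOpen_compl

end ImpRel

section Topology

variable {α : Type*} [TopologicalSpace α]

lemma isTopologicalBasis_isClopen_of_isInducing {β : Type*} [TopologicalSpace β] {f : α → β}
    (hf : IsInducing f) (hβ : IsTopologicalBasis {s : Set β | IsClopen s}) :
    IsTopologicalBasis {s : Set α | IsClopen s} :=
  (hβ.isInducing hf).of_isOpen_of_subset (fun _ hs => hs.isOpen)
    (by rintro _ ⟨s, hs, rfl⟩; exact hs.preimage hf.continuous)

structure ClopenExhaustion (𝒰 : Set (Set α)) (y₀ : α) where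
  V : ℕ → Set α
  ℱ : ℕ → Set (Set α)
  monotone : Monotone V
  isClopen : ∀ m, IsClopen (V m)
  base_mem : ∀ m, y₀ ∈ V m
  exhausts : ∀ x, ∃ m, x ∈ V m
  finite : ∀ m, (ℱ m).Finite
  subset : ∀ m, ℱ m ⊆ 𝒰
  subset_sUnion : ∀ m, V m ⊆ ⋃₀ ℱ m

lemma ClopenExhaustion.nonempty [SecondCountableTopology α]
    (hB : IsTopologicalBasis {s : Set α | IsClopen s}) {𝒰 : Set (Set α)}
    (hopen : ∀ U ∈ 𝒰, IsOpen U) (hcov : ⋃₀ 𝒰 = Set.univ) (y₀ : α) :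
    Nonempty (ClopenExhaustion 𝒰 y₀) := by
  have hrefine : ⋃₀ {C | IsClopen C ∧ ∃ U ∈ 𝒰, C ⊆ U} = Set.univ := by
    refine eq_univ_of_forall fun x => ?_
    obtain ⟨U, hU, hxU⟩ := mem_sUnion.1 (hcov ▸ mem_univ x)
    obtain ⟨C, hC, hxC, hCU⟩ := hB.exists_subset_of_mem_open hxU (hopen U hU)
    exact ⟨C, ⟨hC, U, hU, hCU⟩, hxC⟩
  obtain ⟨𝒞, h𝒞c, h𝒞sub, h𝒞cov⟩ :=
    isOpen_sUnion_countable {C | IsClopen C ∧ ∃ U ∈ 𝒰, C ⊆ U} fun C hC => hC.1.isOpen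
  rw [hrefine] at h𝒞cov
  have hmem : ∀ x, ∃ C ∈ 𝒞, x ∈ C := fun x => mem_sUnion.1 (h𝒞cov ▸ mem_univ x)
  obtain ⟨c, rfl⟩ := h𝒞c.exists_eq_range (let ⟨C, hC, _⟩ := hmem y₀; ⟨C, hC⟩)
  choose u hu hcu using fun k => (h𝒞sub (mem_range_self k)).2
  have hc : ∀ x, ∃ k, x ∈ c k := fun x => by
    obtain ⟨_, ⟨k, rfl⟩, hx⟩ := hmem x
    exact ⟨k, hx⟩
  obtain ⟨k₀, hk₀⟩ := hc y₀
  exact ⟨{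
    V := fun m => ⋃ k ∈ Iic (m + k₀), c k
    ℱ := fun m => u '' Iic (m + k₀)
    monotone := fun m m' hm => biUnion_subset_biUnion_left (Iic_subset_Iic.2 (by omega))
    isClopen := fun m => (finite_Iic _).isClopen_biUnion fun k _ => (h𝒞sub (mem_range_self k)).1
    base_mem := fun m => mem_biUnion (mem_Iic.2 (Nat.le_add_left k₀ m)) hk₀
    exhausts := fun x => let ⟨k, hx⟩ := hc x; ⟨k, mem_biUnion (mem_Iic.2 (by omega)) hx⟩
    finite := fun m => (finite_Iic _).image u
    subset := fun m => by rintro _ ⟨k, -, rfl⟩; exact hu k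
    subset_sUnion := fun m => iUnion₂_subset fun k hk =>
      (hcu k).trans (subset_sUnion_of_mem (mem_image_of_mem u hk)) }⟩

variable {𝒰 : Set (Set α)} {y₀ : α}

lemma ClopenExhaustion.V_ne_univ (E : ClopenExhaustion 𝒰 y₀)
    (hnfs : ¬ ∃ ℱ : Set (Set α), ℱ ⊆ 𝒰 ∧ ℱ.Finite ∧ ⋃₀ ℱ = Set.univ) (m : ℕ) :
    E.V m ≠ Set.univ :=
  fun h => hnfs ⟨E.ℱ m, E.subset m, E.finite m, univ_subset_iff.1 (h ▸ E.subset_sUnion m)⟩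

lemma ClopenExhaustion.oGamma_impRel (E : ClopenExhaustion 𝒰 y₀)
    (hnfs : ¬ ∃ ℱ : Set (Set α), ℱ ⊆ 𝒰 ∧ ℱ.Finite ∧ ⋃₀ ℱ = Set.univ) :
    OGamma (α × α) (range fun m => impRel (E.V m)) := by
  refine ⟨gammaCover_range infinite_univ (fun n hn => absurd (mem_univ n) hn) (fun m h => ?_)
    (fun p => ?_), ?_⟩
  · obtain ⟨x, hx⟩ := (ne_univ_iff_exists_notMem _).1 (E.V_ne_univ hnfs m)
    exact hx ((mem_impRel_base (E.base_mem m) x).1 (h ▸ mem_univ _))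
  · obtain ⟨m₀, hm₀⟩ := E.exhausts p.1
    refine (finite_Iio m₀).subset fun m ⟨_, hp⟩ => mem_Iio.2 <| not_le.1 fun hm => hp fun _ => ?_
    exact E.monotone hm hm₀
  · rintro _ ⟨m, rfl⟩
    exact isOpen_impRel (E.isClopen m)

end Topology

/-- Either the members containing some `(z, y₀)` already form the subfamily, or the τ-dichotomy
applied to `(y, x)` and `(x, y₀)` shows that the whole cover does. -/
lemma exists_gamma_subfamily_of_tauCover {α : Type*} {y₀ : α} {𝒯 : Set (Set (α × α))}
    (hτ : TauCover (α × α) 𝒯) (himp : ∀ W ∈ 𝒯, ∃ V, y₀ ∈ V ∧ W = impRel V) :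
    ∃ 𝒢 ⊆ 𝒯, 𝒢.Infinite ∧ ∀ x, {W | W ∈ 𝒢 ∧ (x, y₀) ∉ W}.Finite := by
  obtain ⟨-, hinf, hdich⟩ := hτ
  have hkey : ∀ W ∈ 𝒯, ∀ a b, (a, b) ∈ W ↔ ((b, y₀) ∈ W → (a, y₀) ∈ W) := by
    intro W hW a b
    obtain ⟨V, hy₀, rfl⟩ := himp W hW
    rw [mem_impRel_base hy₀, mem_impRel_base hy₀]
    rfl
  by_cases hz : ∃ z, ∀ y, {W | W ∈ 𝒯 ∧ (z, y₀) ∈ W ∧ (y, y₀) ∉ W}.Finite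
  · obtain ⟨z, hz⟩ := hz
    refine ⟨{W | W ∈ 𝒯 ∧ (z, y₀) ∈ W}, fun W hW => hW.1, hinf (z, y₀), fun y => ?_⟩
    exact (hz y).subset fun W ⟨⟨hW, hzW⟩, hyW⟩ => ⟨hW, hzW, hyW⟩
  · push Not at hz
    refine ⟨𝒯, subset_rfl, (hinf (y₀, y₀)).mono fun W hW => hW.1, fun x => ?_⟩
    obtain ⟨y, hy⟩ := hz x
    rcases hdich (y, x) (x, y₀) with hfin | hfin
    · exact hfin.subset fun W ⟨hW, hxW⟩ => ⟨hW, (hkey W hW y x).2 (absurd · hxW), hxW⟩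
    · refine (hy (hfin.subset fun W ⟨hW, hxW, hyW⟩ => ⟨hW, hxW, fun hyx => ?_⟩)).elim
      exact hyW ((hkey W hW y x).1 hyx hxW)

lemma exists_gamma_selection {α : Type*} [TopologicalSpace α] {U : ℕ → Set (Set α)} {y₀ : α}
    (E : ∀ n, ClopenExhaustion (U n) y₀)
    (hnfs : ∀ n, ¬ ∃ ℱ : Set (Set α), ℱ ⊆ U n ∧ ℱ.Finite ∧ ⋃₀ ℱ = Set.univ)
    (h : SFin (α × α) (OGamma (α × α)) (OTau (α × α))) :
    ∃ (N : Set ℕ) (m : ℕ → ℕ), N.Infinite ∧ ∀ x, {n | n ∈ N ∧ x ∉ (E n).V (m n)}.Finite := by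
  obtain ⟨F, hF, hτ, -⟩ := h _ fun n => (E n).oGamma_impRel (hnfs n)
  obtain ⟨𝒢, h𝒢, h𝒢inf, h𝒢γ⟩ := exists_gamma_subfamily_of_tauCover hτ fun W hW => by
    obtain ⟨n, hn⟩ := mem_iUnion.1 hW
    obtain ⟨m, rfl⟩ := (hF n).2 hn
    exact ⟨_, (E n).base_mem m, rfl⟩
  obtain ⟨N, w, hN, hwinj, hw⟩ :=
    exists_injOn_of_infinite_subset_iUnion (fun n => (hF n).1) h𝒢inf h𝒢
  choose! m hm using fun n hn => (hF n).2 (hw n hn).2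
  refine ⟨N, m, hN, fun x => ((h𝒢γ x).subset ?_).of_finite_image (hwinj.mono fun n hn => hn.1)⟩
  rintro _ ⟨n, ⟨hn, hx⟩, rfl⟩
  exact ⟨(hw n hn).1, hm n hn ▸ (mem_impRel_base ((E n).base_mem _) x).not.2 hx⟩

/-- If `X × X` satisfies Sfin(Γ,Τ), then `X` satisfies Ufin(O,Γ). -/
theorem stmt4 (X : Set Cantor) (hX : X.Infinite)
    (h : SFin (↥X × ↥X) (OGamma (↥X × ↥X)) (OTau (↥X × ↥X))) :
    UFin ↥X (OCov ↥X) (OGamma ↥X) := by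
  intro U hU hnfs
  obtain ⟨y₀⟩ : Nonempty X := hX.nonempty.to_subtype
  have hB : IsTopologicalBasis {s : Set X | IsClopen s} :=
    isTopologicalBasis_isClopen_of_isInducing IsInducing.subtypeVal isTopologicalBasis_isClopen
  let E n := (ClopenExhaustion.nonempty hB (hU n).2 (hU n).1.2.1 y₀).some
  obtain ⟨N, m, hN, hfin⟩ := exists_gamma_selection E hnfs h
  let F n := if n ∈ N then (E n).ℱ (m n) else ∅
  have hFU : ∀ n, (F n).Finite ∧ F n ⊆ U n := fun n => by
    by_cases hn : n ∈ N
    · simp only [F, if_pos hn]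
      exact ⟨(E n).finite _, (E n).subset _⟩
    · simp only [F, if_neg hn]
      exact ⟨finite_empty, empty_subset _⟩
  refine ⟨F, hFU, gammaCover_range hN (fun n hn => by simp [F, hn])
    (fun n hcov => hnfs n ⟨F n, (hFU n).2, (hFU n).1, hcov⟩)
    (fun x => (hfin x).subset fun n ⟨hn, hx⟩ => ⟨hn, fun hxV => hx ?_⟩), ?_⟩
  · simp only [F, if_pos hn]
    exact (E n).subset_sUnion _ hxV
  · rintro _ ⟨n, rfl⟩
    exact isOpen_sUnion fun S hS => (hU n).2 S ((hFU n).2 hS)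

end
end

section
/- For a space X, the following are equivalent: (1) X satisfies S1(C_Τ, C_Τ); (2) for every continuous function Ψ : X → 2^(ℕ×ℕ), if the image Ψ[X] is a τ-family, then Ψ[X] is τ-diagonalizable. -/
open Set Filter Cardinal
open scoped Classical

noncomputable section

/-!
Read row by row, a continuous map `X → 2^(ℕ×ℕ)` is a matrix of clopen sets, and the τ-family
condition says that each row satisfies the τ-cover conditions, except that a set may occur in it
many times. Toggling the occurrences of an infinitely repeated set on pairwise disjoint nonempty
clopen markers makes them distinct while changing each point's membership at most once, so every
row yields a clopen τ-cover. Deleting from the `n`-th cover the first `n` sets of a fixed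
enumeration of all the covers ensures that no set is selected infinitely often, and for such
selections "τ-cover" and "τ-diagonal sequence" mean the same. Hence S1(C_Τ, C_Τ) applied to the
marked rows gives a τ-diagonalization, and conversely a τ-diagonalization of the injectively
enumerated thinned covers is a τ-selection.
-/

open Function

instance Subtype.totallySeparatedSpace {α : Type*} [TopologicalSpace α] [TotallySeparatedSpace α]
    {p : α → Prop} : TotallySeparatedSpace (Subtype p) :=
  totallySeparatedSpace_iff_exists_isClopen.2 fun _ _ hxy =>
    let ⟨U, hU, hx, hy⟩ := exists_isClopen_of_totally_separated (Subtype.val_injective.ne hxy)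
    ⟨_, hU.preimage continuous_subtype_val, hx, hy⟩

section Markers

variable {α : Type*} [TopologicalSpace α] [TotallySeparatedSpace α]

lemma exists_isClopen_infinite_inter_nonempty_diff {S : Set α} (hS : S.Infinite) :
    ∃ C, IsClopen C ∧ (S ∩ C).Infinite ∧ (S \ C).Nonempty := by
  obtain ⟨a, ha, b, hb, hab⟩ := hS.nontrivial
  obtain ⟨U, hU, haU, hbU⟩ := exists_isClopen_of_totally_separated hab
  by_cases h : (S ∩ U).Infinite
  · exact ⟨U, hU, h, b, hb, hbU⟩
  · refine ⟨Uᶜ, hU.compl, ?_, a, ha, not_not.2 haU⟩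
    rw [← sdiff_eq, ← sdiff_self_inter]
    exact hS.sdiff (not_infinite.1 h)

lemma exists_pairwise_disjoint_isClopen [Infinite α] :
    ∃ d : ℕ → Set α, (∀ k, IsClopen (d k)) ∧ (∀ k, (d k).Nonempty) ∧ Pairwise (Disjoint on d) := by
  have shrink : ∀ S : {S : Set α // IsClopen S ∧ S.Infinite},
      ∃ S' : {S : Set α // IsClopen S ∧ S.Infinite}, S'.1 ⊆ S.1 ∧ (S.1 \ S'.1).Nonempty := by
    rintro ⟨S, hSc, hSi⟩
    obtain ⟨C, hC, hSC, a, haS, haC⟩ := exists_isClopen_infinite_inter_nonempty_diff hSi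
    exact ⟨⟨S ∩ C, hSc.inter hC, hSC⟩, inter_subset_left, a, haS, fun h => haC h.2⟩
  choose next hsub hne using shrink
  let T : ℕ → {S : Set α // IsClopen S ∧ S.Infinite} :=
    fun k => next^[k] ⟨univ, isClopen_univ, infinite_univ⟩
  have hT : ∀ k, T (k + 1) = next (T k) := fun k => iterate_succ_apply' next k _
  have hanti : Antitone fun k => (T k).1 :=
    antitone_nat_of_succ_le fun k => by simpa only [hT] using hsub (T k)
  refine ⟨fun k => (T k).1 \ (T (k + 1)).1, fun k => (T k).2.1.diff (T (k + 1)).2.1,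
    fun k => by simpa only [hT] using hne (T k), (pairwise_disjoint_on _).2 fun k l hkl => ?_⟩
  exact disjoint_sdiff_left.mono_right (sdiff_subset.trans (hanti (Nat.succ_le_of_lt hkl)))

end Markers

lemma eventually_atTop_imp_iff_finite {p q : ℕ → Prop} :
    (∀ᶠ n in atTop, p n → q n) ↔ {n | p n ∧ ¬ q n}.Finite := by
  simp only [← Nat.cofinite_eq_atTop, eventually_cofinite, Classical.not_imp]

section Disjoint

variable {α : Type*} {d : ℕ → Set α}

lemma Pairwise.finite_setOf_mem (hd : Pairwise (Disjoint on d)) (x : α) :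
    {n | x ∈ d n}.Finite :=
  Subsingleton.finite fun _ hi _ hj => hd.eq (not_disjoint_iff.2 ⟨x, hi, hj⟩)

lemma Pairwise.eventually_notMem (hd : Pairwise (Disjoint on d)) (x : α) :
    ∀ᶠ n in atTop, x ∉ d n := by
  rw [← Nat.cofinite_eq_atTop]
  exact (hd.finite_setOf_mem x).eventually_cofinite_notMem

end Disjoint

section RangeFinite

variable {β : Type*} {c : ℕ → β} {P : β → Prop}

lemma finite_mem_range_of_finite (h : {n | P (c n)}.Finite) : {b | b ∈ range c ∧ P b}.Finite :=
  (h.image c).subset <| by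
    rintro _ ⟨⟨n, rfl⟩, hP⟩
    exact ⟨n, hP, rfl⟩

lemma finite_mem_range_iff (hc : ∀ b, {n | c n = b}.Finite) :
    {b | b ∈ range c ∧ P b}.Finite ↔ {n | P (c n)}.Finite :=
  ⟨fun h => (h.preimage' fun b _ => hc b).subset fun n hn => ⟨mem_range_self n, hn⟩,
    finite_mem_range_of_finite⟩

lemma exists_injective_range_eq {s : Set β} (hc : s.Countable) (hi : s.Infinite) :
    ∃ f : ℕ → β, Injective f ∧ range f = s := by
  obtain ⟨_⟩ := countable_infinite_iff_nonempty_denumerable.1 ⟨hc, hi⟩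
  refine ⟨Subtype.val ∘ (Denumerable.eqv s).symm,
    Subtype.val_injective.comp (Equiv.injective _), ?_⟩
  rw [range_comp, Equiv.range_eq_univ, image_univ, Subtype.range_coe]

end RangeFinite

section TauSeq

variable {α : Type*}

/-- The τ-cover conditions for a sequence of sets, counted with multiplicity. -/
def IsTauSeq (V : ℕ → Set α) : Prop :=
  (∀ x, ∃ᶠ n in atTop, x ∈ V n) ∧
    ∀ x y, (∀ᶠ n in atTop, x ∈ V n → y ∈ V n) ∨ (∀ᶠ n in atTop, y ∈ V n → x ∈ V n)

lemma IsTauSeq.congr {V W : ℕ → Set α} (hV : IsTauSeq V)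
    (h : ∀ x, ∀ᶠ n in atTop, (x ∈ V n ↔ x ∈ W n)) : IsTauSeq W := by
  refine ⟨fun x => (hV.1 x).mp ((h x).mono fun _ hn => hn.1), fun x y => ?_⟩
  refine (hV.2 x y).imp (fun hxy => ?_) fun hyx => ?_
  · filter_upwards [hxy, h x, h y] with n hn hx hy
    rwa [← hx, ← hy]
  · filter_upwards [hyx, h x, h y] with n hn hx hy
    rwa [← hx, ← hy]

lemma finite_mem_range_of_eventually {c : ℕ → Set α} {x y : α}
    (h : ∀ᶠ n in atTop, x ∈ c n → y ∈ c n) : {U | U ∈ range c ∧ x ∈ U ∧ y ∉ U}.Finite :=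
  finite_mem_range_of_finite (eventually_atTop_imp_iff_finite.1 h)

lemma IsTauSeq.infinite_mem_range {c : ℕ → Set α} (hc : ∀ U, {n | c n = U}.Finite)
    (h : IsTauSeq c) (x : α) : {U | U ∈ range c ∧ x ∈ U}.Infinite := fun hfin =>
  Nat.frequently_atTop_iff_infinite.1 (h.1 x) ((finite_mem_range_iff hc).1 hfin)

lemma isTauSeq_of_tauCover_range {c : ℕ → Set α} (hc : ∀ U, {n | c n = U}.Finite)
    (h : TauCover α (range c)) : IsTauSeq c := by
  refine ⟨fun x => Nat.frequently_atTop_iff_infinite.2 fun hfin =>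
    h.2.1 x ((finite_mem_range_iff hc).2 hfin), fun x y => ?_⟩
  simp only [eventually_atTop_imp_iff_finite]
  exact (h.2.2 x y).imp (finite_mem_range_iff hc).1 (finite_mem_range_iff hc).1

lemma tauCover_diff {𝒰 F : Set (Set α)} (hcount : 𝒰.Countable)
    (hpt : ∀ x, {U | U ∈ 𝒰 ∧ x ∈ U}.Infinite)
    (hpair : ∀ x y, {U | U ∈ 𝒰 ∧ x ∈ U ∧ y ∉ U}.Finite ∨ {U | U ∈ 𝒰 ∧ y ∈ U ∧ x ∉ U}.Finite)
    (hF : F.Finite) (huniv : Set.univ ∈ F) : TauCover α (𝒰 \ F) := by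
  have hpt' : ∀ x, {U | U ∈ 𝒰 \ F ∧ x ∈ U}.Infinite := fun x =>
    ((hpt x).sdiff hF).mono fun _ hU => ⟨⟨hU.1.1, hU.2⟩, hU.1.2⟩
  refine ⟨⟨hcount.mono sdiff_subset, sUnion_eq_univ_iff.2 fun x => ?_, fun h => h.2 huniv⟩,
    hpt', fun x y => (hpair x y).imp (fun h => ?_) fun h => ?_⟩
  · obtain ⟨U, hU, hx⟩ := (hpt' x).nonempty
    exact ⟨U, hU, hx⟩
  · exact h.subset fun U hU => ⟨hU.1.1, hU.2⟩
  · exact h.subset fun U hU => ⟨hU.1.1, hU.2⟩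

lemma tauCover_range_diff_univ {c : ℕ → Set α}
    (hpt : ∀ x, {U | U ∈ range c ∧ x ∈ U}.Infinite)
    (hpair : ∀ x y, (∀ᶠ n in atTop, x ∈ c n → y ∈ c n) ∨ (∀ᶠ n in atTop, y ∈ c n → x ∈ c n)) :
    TauCover α (range c \ {Set.univ}) :=
  tauCover_diff (countable_range c) hpt
    (fun x y => (hpair x y).imp finite_mem_range_of_eventually finite_mem_range_of_eventually)
    (finite_singleton _) rfl

end TauSeq

lemma exists_kTau_thinning {α : Type*} [TopologicalSpace α] {𝒰 : ℕ → Set (Set α)}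
    (h𝒰 : ∀ n, KTau α (𝒰 n)) :
    ∃ 𝒱 : ℕ → Set (Set α), (∀ n, 𝒱 n ⊆ 𝒰 n ∧ KTau α (𝒱 n)) ∧
      ∀ V : ℕ → Set α, (∀ n, V n ∈ 𝒱 n) → ∀ U, {n | V n = U}.Finite := by
  obtain ⟨e, he⟩ := countable_iff_exists_subset_range.1 (countable_iUnion fun n => (h𝒰 n).1.1.1)
  refine ⟨fun n => 𝒰 n \ insert Set.univ (e '' Iic n), fun n => ⟨sdiff_subset, ?_, ?_⟩, ?_⟩
  · obtain ⟨⟨⟨hcount, -, -⟩, hpt, hpair⟩, -⟩ := h𝒰 n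
    exact tauCover_diff hcount hpt hpair (((finite_Iic n).image e).insert Set.univ) (mem_insert _ _)
  · exact fun U hU => (h𝒰 n).2 U hU.1
  · intro V hV U
    by_cases hU : U ∈ range e
    · -- the set `e j` is deleted from the `n`-th cover for every `n ≥ j`
      obtain ⟨j, rfl⟩ := hU
      exact (finite_Iio j).subset fun n hn =>
        mem_Iio.2 <| lt_of_not_ge fun hjn => (hV n).2 (Or.inr ⟨j, hjn, (hn : V n = e j).symm⟩)
    · exact finite_empty.subset fun n (hn : V n = U) =>
        hU (he (mem_iUnion.2 ⟨n, hn ▸ (hV n).1⟩))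

section MarkRepeated

variable {α : Type*} {b d : ℕ → Set α}

/-- For pairwise disjoint nonempty markers `d`, the occurrences of an infinitely repeated set
become pairwise distinct, while the membership of each point changes at most once. -/
def markRepeated (b d : ℕ → Set α) (m : ℕ) : Set α :=
  if {m' | b m' = b m}.Finite then b m else symmDiff (b m) (d m)

lemma mem_markRepeated_iff {x : α} {m : ℕ} (hx : x ∉ d m) :
    x ∈ markRepeated b d m ↔ x ∈ b m := by
  unfold markRepeated
  split_ifs <;> simp [mem_symmDiff, hx]

lemma IsTauSeq.markRepeated (hb : IsTauSeq b) (hd : Pairwise (Disjoint on d)) :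
    IsTauSeq (markRepeated b d) :=
  hb.congr fun x => (hd.eventually_notMem x).mono fun _ hm => (mem_markRepeated_iff hm).symm

lemma infinite_mem_range_markRepeated (hb : ∀ x, ∃ᶠ m in atTop, x ∈ b m)
    (hd : Pairwise (Disjoint on d)) (hne : ∀ m, (d m).Nonempty) (x : α) :
    {U | U ∈ range (markRepeated b d) ∧ x ∈ U}.Infinite := by
  by_cases hrep : ∃ m, x ∈ b m ∧ {m' | b m' = b m}.Infinite
  · obtain ⟨m, hxm, hrep⟩ := hrep
    have hmark : ∀ m' ∈ {m' | b m' = b m}, markRepeated b d m' = symmDiff (b m) (d m') :=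
      fun m' (hm' : b m' = b m) => by rw [markRepeated, hm', if_neg hrep]
    have hinj : InjOn (markRepeated b d) {m' | b m' = b m} := by
      intro i hi j hj hij
      rw [hmark i hi, hmark j hj] at hij
      by_contra hij'
      have hdisj : Disjoint (d i) (d j) := hd hij'
      rw [symmDiff_right_injective _ hij] at hdisj
      exact (hne j).ne_empty (disjoint_self.1 hdisj)
    refine ((hrep.sdiff (hd.finite_setOf_mem x)).image (hinj.mono sdiff_subset)).mono ?_
    rintro _ ⟨m', ⟨hm', hxd⟩, rfl⟩
    exact ⟨mem_range_self m', (mem_markRepeated_iff hxd).2 ((hm' : b m' = b m) ▸ hxm)⟩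
  · push Not at hrep
    have hS : {m | x ∈ b m}.Infinite := Nat.frequently_atTop_iff_infinite.1 (hb x)
    have himage : (b '' {m | x ∈ b m}).Infinite := fun hfin =>
      hS ((hfin.preimage' fun _ ⟨m, hm, hU⟩ => hU ▸ hrep m hm).subset (subset_preimage_image _ _))
    refine himage.mono ?_
    rintro _ ⟨m, hm, rfl⟩
    exact ⟨⟨m, by rw [markRepeated, if_pos (hrep m hm)]⟩, hm⟩

end MarkRepeated

lemma kTau_range_markRepeated_diff_univ {α : Type*} [TopologicalSpace α] {b d : ℕ → Set α}
    (hbc : ∀ m, IsClopen (b m)) (hb : IsTauSeq b) (hdc : ∀ m, IsClopen (d m))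
    (hd : Pairwise (Disjoint on d)) (hne : ∀ m, (d m).Nonempty) :
    KTau α (range (markRepeated b d) \ {Set.univ}) := by
  refine ⟨tauCover_range_diff_univ (infinite_mem_range_markRepeated hb.1 hd hne)
    (hb.markRepeated hd).2, ?_⟩
  rintro _ ⟨⟨m, rfl⟩, -⟩
  unfold markRepeated
  split_ifs
  exacts [hbc m, ((hbc m).diff (hdc m)).union ((hdc m).diff (hbc m))]

section Diagonalization

variable {α : Type*} [TopologicalSpace α]

theorem S1.exists_isTauSeq_diag [TotallySeparatedSpace α] [Infinite α]
    (hS1 : S1 α (KTau α) (KTau α)) {B : ℕ → ℕ → Set α} (hBc : ∀ n m, IsClopen (B n m))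
    (hB : ∀ n, IsTauSeq (B n)) : ∃ g : ℕ → ℕ, IsTauSeq fun n => B n (g n) := by
  obtain ⟨d, hdc, hdne, hd⟩ := exists_pairwise_disjoint_isClopen (α := α)
  have hrow : ∀ n, Pairwise (Disjoint on fun m => d (Nat.pair n m)) := fun n =>
    hd.comp_of_injective fun _ _ h => (Nat.pair_eq_pair.1 h).2
  obtain ⟨𝒱, h𝒱, hfib⟩ := exists_kTau_thinning fun n =>
    kTau_range_markRepeated_diff_univ (hBc n) (hB n) (fun _ => hdc _) (hrow n) fun _ => hdne _
  obtain ⟨V, hV, hVtau⟩ := hS1 𝒱 fun n => (h𝒱 n).2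
  choose g hg using fun n => ((h𝒱 n).1 (hV n)).1
  have hdiag : Pairwise (Disjoint on fun n => d (Nat.pair n (g n))) :=
    hd.comp_of_injective fun _ _ h => (Nat.pair_eq_pair.1 h).1
  refine ⟨g, (isTauSeq_of_tauCover_range (hfib V hV) hVtau.1).congr fun x => ?_⟩
  filter_upwards [hdiag.eventually_notMem x] with n hn
  rw [← hg n]
  exact mem_markRepeated_iff (d := fun m => d (Nat.pair n m)) hn

theorem s1_kTau_of_forall_exists_isTauSeq_diag [Nonempty α]
    (h : ∀ B : ℕ → ℕ → Set α, (∀ n m, IsClopen (B n m)) → (∀ n, IsTauSeq (B n)) →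
      ∃ g : ℕ → ℕ, IsTauSeq fun n => B n (g n)) :
    S1 α (KTau α) (KTau α) := by
  intro 𝒰 h𝒰
  obtain ⟨𝒱, h𝒱, hfib⟩ := exists_kTau_thinning h𝒰
  have h𝒱inf : ∀ n, (𝒱 n).Infinite := fun n =>
    ((h𝒱 n).2.1.2.1 (Classical.arbitrary α)).mono fun _ hU => hU.1
  choose W hWinj hW using fun n => exists_injective_range_eq (h𝒱 n).2.1.1.1 (h𝒱inf n)
  have hWmem : ∀ n m, W n m ∈ 𝒱 n := fun n m => hW n ▸ mem_range_self m
  obtain ⟨g, hg⟩ := h W (fun n m => (h𝒱 n).2.2 _ (hWmem n m)) fun n =>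
    isTauSeq_of_tauCover_range
      (fun _ => Subsingleton.finite fun _ hi _ hj => hWinj n (hi.trans hj.symm))
      (hW n ▸ (h𝒱 n).2.1)
  have hfinV := hfib _ fun n => hWmem n (g n)
  have huniv : Set.univ ∉ range fun n => W n (g n) := by
    rintro ⟨n, hn⟩
    exact (h𝒱 n).2.1.1.2.2 (hn ▸ hWmem n (g n))
  refine ⟨fun n => W n (g n), fun n => (h𝒱 n).1 (hWmem n (g n)), ?_, ?_⟩
  · rw [← sdiff_singleton_eq_self huniv]
    exact tauCover_range_diff_univ (hg.infinite_mem_range hfinV) hg.2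
  · rintro _ ⟨n, rfl⟩
    exact (h𝒱 n).2.2 _ (hWmem n (g n))

end Diagonalization

section Arrays

variable {α : Type*}

lemma tauFamily_range_iff (Ψ : α → Arr) :
    TauFamily (range Ψ) ↔ ∀ n, IsTauSeq fun m => {x | Ψ x (n, m) = true} := by
  simp only [TauFamily, IsTauSeq, forall_mem_range, Bool.le_iff_imp, mem_ofPred_eq]
  exact ⟨fun h n => ⟨fun x => h.1 x n, fun x y => h.2 x y n⟩,
    fun h => ⟨fun x n => (h n).1 x, fun x y n => (h n).2 x y⟩⟩

lemma tauDiag_range_iff (Ψ : α → Arr) :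
    TauDiag (range Ψ) ↔ ∃ g : ℕ → ℕ, IsTauSeq fun n => {x | Ψ x (n, g n) = true} := by
  simp only [TauDiag, IsTauSeq, forall_mem_range, Bool.le_iff_imp, mem_ofPred_eq]

end Arrays

/-- A space satisfies S1(C_Τ,C_Τ) iff every continuous image in `2^(ℕ×ℕ)`
which is a τ-family is τ-diagonalizable. -/
theorem stmt7 (X : Set Cantor) (hX : X.Infinite) :
    S1 ↥X (KTau ↥X) (KTau ↥X) ↔
      ∀ Ψ : ↥X → Arr, Continuous Ψ → TauFamily (range Ψ) → TauDiag (range Ψ) := by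
  have : Infinite X := hX.to_subtype
  refine ⟨fun hS1 Ψ hΨ hfam => ?_,
    fun h => s1_kTau_of_forall_exists_isTauSeq_diag fun B hBc hB => ?_⟩
  · rw [tauDiag_range_iff]
    exact hS1.exists_isTauSeq_diag
      (fun n m => (isClopen_discrete {true}).preimage ((continuous_apply (n, m)).comp hΨ))
      ((tauFamily_range_iff Ψ).1 hfam)
  · have hrow : ∀ n m, {x | (B n m).boolIndicator x = true} = B n m := fun n m =>
      ext fun x => (mem_iff_boolIndicator _ x).symm
    have hΨ := continuous_pi fun p : ℕ × ℕ =>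
      (continuous_boolIndicator_iff_isClopen _).2 (hBc p.1 p.2)
    have hdiag := h _ hΨ ((tauFamily_range_iff _).2 (by simpa only [hrow] using hB))
    simpa only [tauDiag_range_iff, hrow] using hdiag

end
end

section
/- If every finite power X^k (with the product topology) of a space X satisfies S1(Τ,O), then X satisfies S1(Τ,Ω). -/
open Set Filter Cardinal
open scoped Classical

noncomputable section

/-!
Split the given τ-covers into infinitely many infinite subsequences, the `k`-th one indexed by
`Nat.pair k n`. In a τ-cover every finite set lies in infinitely many members, so the `(k+1)`-st
powers `U^(k+1)` of the members of a τ-cover of `X` form a τ-cover of `X^(k+1)`. Selecting from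
the `k`-th subsequence by S1(Τ,O) in `X^(k+1)` gives sets whose powers cover `X^(k+1)`, that is,
every set of at most `k+1` points lies in one of the selected sets. Hence all selections together
form an ω-cover.
-/

def powerFamily (ι : Type*) {α : Type*} (𝒰 : Set (Set α)) : Set (Set (ι → α)) :=
  (fun U => univ.pi fun _ : ι => U) '' 𝒰

section

variable {α ι : Type*}

theorem Set.Finite.exists_fin_succ_range_eq {s : Set α} (hs : s.Finite) (hne : s.Nonempty) :
    ∃ (k : ℕ) (f : Fin (k + 1) → α), range f = s := by
  obtain ⟨_ | k, f, hf⟩ := hs.fin_embedding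
  · simp [← hf] at hne
  · exact ⟨k, f, hf⟩

theorem mem_univ_pi_const_iff {U : Set α} {f : ι → α} :
    f ∈ univ.pi (fun _ : ι => U) ↔ range f ⊆ U := by
  simp [range_subset_iff]

theorem univ_pi_const_injective [Nonempty ι] :
    Function.Injective fun U : Set α => univ.pi fun _ : ι => U := by
  intro U V hUV
  ext x
  simpa using congrArg (fun S => (fun _ => x) ∈ S) hUV

namespace TauCover

variable {𝒰 : Set (Set α)}

theorem finite_or_finite (h : TauCover α 𝒰) {A B : Set α} (hA : A.Finite) (hB : B.Finite) :
    {U | U ∈ 𝒰 ∧ A ⊆ U ∧ ¬ B ⊆ U}.Finite ∨ {U | U ∈ 𝒰 ∧ B ⊆ U ∧ ¬ A ⊆ U}.Finite := by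
  by_cases hAB : ∀ b ∈ B, ∃ a ∈ A, {U | U ∈ 𝒰 ∧ a ∈ U ∧ b ∉ U}.Finite
  · left
    choose! a haA ha using hAB
    refine (hB.biUnion ha).subset ?_
    rintro U ⟨hU, hAU, hBU⟩
    obtain ⟨b, hb, hbU⟩ := not_subset.1 hBU
    exact mem_biUnion hb ⟨hU, hAU (haA b hb), hbU⟩
  · right
    push Not at hAB
    obtain ⟨b, hb, hinf⟩ := hAB
    have hfin : ∀ a ∈ A, {U | U ∈ 𝒰 ∧ b ∈ U ∧ a ∉ U}.Finite := fun a ha =>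
      (h.2.2 a b).resolve_left (hinf a ha)
    refine (hA.biUnion hfin).subset ?_
    rintro U ⟨hU, hBU, hAU⟩
    obtain ⟨a, ha, haU⟩ := not_subset.1 hAU
    exact mem_biUnion ha ⟨hU, hBU hb, haU⟩

theorem infinite_setOf_union_subset (h : TauCover α 𝒰) {A B : Set α} (hA : A.Finite)
    (hB : B.Finite) (hAinf : {U | U ∈ 𝒰 ∧ A ⊆ U}.Infinite)
    (hBinf : {U | U ∈ 𝒰 ∧ B ⊆ U}.Infinite) : {U | U ∈ 𝒰 ∧ A ∪ B ⊆ U}.Infinite := by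
  rcases h.finite_or_finite hA hB with hfin | hfin
  · refine (hAinf.sdiff hfin).mono ?_
    rintro U ⟨⟨hU, hAU⟩, hBU⟩
    exact ⟨hU, union_subset hAU (by_contra fun hBU' => hBU ⟨hU, hAU, hBU'⟩)⟩
  · refine (hBinf.sdiff hfin).mono ?_
    rintro U ⟨⟨hU, hBU⟩, hAU⟩
    exact ⟨hU, union_subset (by_contra fun hAU' => hAU ⟨hU, hBU, hAU'⟩) hBU⟩

theorem infinite_setOf_subset [Nonempty α] (h : TauCover α 𝒰) {F : Set α} (hF : F.Finite) :
    {U | U ∈ 𝒰 ∧ F ⊆ U}.Infinite := by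
  induction F, hF using Set.Finite.induction_on with
  | empty =>
    obtain ⟨x⟩ := ‹Nonempty α›
    exact (h.2.1 x).mono fun U hU => ⟨hU.1, empty_subset U⟩
  | @insert x F _ hF ih =>
    rw [insert_eq]
    exact h.infinite_setOf_union_subset (finite_singleton x) hF (by simpa using h.2.1 x) ih

end TauCover

variable {𝒰 : Set (Set α)}

theorem tauCover_powerFamily [Finite ι] [Nonempty ι] (h : TauCover α 𝒰) :
    TauCover (ι → α) (powerFamily ι 𝒰) := by
  have hmem : ∀ f : ι → α, {S | S ∈ powerFamily ι 𝒰 ∧ f ∈ S}.Infinite := by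
    intro f
    have : Nonempty α := ⟨f (Classical.arbitrary ι)⟩
    refine ((h.infinite_setOf_subset (finite_range f)).image
      univ_pi_const_injective.injOn).mono ?_
    rintro _ ⟨U, ⟨hU, hfU⟩, rfl⟩
    exact ⟨mem_image_of_mem _ hU, mem_univ_pi_const_iff.2 hfU⟩
  have hsep : ∀ f g : ι → α, {S | S ∈ powerFamily ι 𝒰 ∧ f ∈ S ∧ g ∉ S} ⊆
      (fun U => univ.pi fun _ : ι => U) '' {U | U ∈ 𝒰 ∧ range f ⊆ U ∧ ¬ range g ⊆ U} := by
    rintro f g _ ⟨⟨U, hU, rfl⟩, hf, hg⟩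
    exact ⟨U, ⟨hU, mem_univ_pi_const_iff.1 hf, mt mem_univ_pi_const_iff.2 hg⟩, rfl⟩
  refine ⟨⟨h.1.1.image _, ?_, ?_⟩, hmem, fun f g => ?_⟩
  · exact eq_univ_of_forall fun f => mem_sUnion.2 (hmem f).nonempty
  · rintro ⟨U, hU, hUuniv⟩
    rw [← pi_univ univ, univ_pi_const_injective.eq_iff] at hUuniv
    exact h.1.2.2 (hUuniv ▸ hU)
  · exact (h.finite_or_finite (finite_range f) (finite_range g)).imp
      (fun hfin => (hfin.image _).subset (hsep f g)) (fun hfin => (hfin.image _).subset (hsep g f))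

variable [TopologicalSpace α]

theorem openFam_powerFamily [Finite ι] (h : OpenFam α 𝒰) : OpenFam (ι → α) (powerFamily ι 𝒰) := by
  rintro _ ⟨U, hU, rfl⟩
  exact isOpen_set_pi finite_univ fun _ _ => h U hU

theorem oTau_powerFamily [Finite ι] [Nonempty ι] (h : OTau α 𝒰) :
    OTau (ι → α) (powerFamily ι 𝒰) :=
  ⟨tauCover_powerFamily h.1, openFam_powerFamily h.2⟩

theorem oOmega_of_forall_finite_subset (hc : 𝒰.Countable) (huniv : Set.univ ∉ 𝒰)
    (hopen : OpenFam α 𝒰) (hω : ∀ F : Set α, F.Finite → ∃ U ∈ 𝒰, F ⊆ U) : OOmega α 𝒰 := by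
  refine ⟨⟨⟨hc, eq_univ_of_forall fun x => ?_, huniv⟩, hω⟩, hopen⟩
  obtain ⟨U, hU, hxU⟩ := hω {x} (finite_singleton x)
  exact ⟨U, hU, hxU rfl⟩

theorem exists_forall_range_subset_of_S1_pow (k : ℕ)
    (h : S1 (Fin (k + 1) → α) (OTau (Fin (k + 1) → α)) (OCov (Fin (k + 1) → α)))
    {𝒰 : ℕ → Set (Set α)} (h𝒰 : ∀ n, OTau α (𝒰 n)) :
    ∃ W : ℕ → Set α, (∀ n, W n ∈ 𝒰 n) ∧ ∀ f : Fin (k + 1) → α, ∃ n, range f ⊆ W n := by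
  obtain ⟨S, hS, hcov⟩ := h (fun n => powerFamily (Fin (k + 1)) (𝒰 n)) fun n => oTau_powerFamily (h𝒰 n)
  choose W hW hWS using hS
  refine ⟨W, hW, fun f => ?_⟩
  obtain ⟨_, ⟨n, rfl⟩, hf⟩ := mem_sUnion.1 (hcov.1.2.1.symm ▸ Set.mem_univ f : f ∈ ⋃₀ range S)
  rw [← hWS n] at hf
  exact ⟨n, mem_univ_pi_const_iff.1 hf⟩

theorem S1_OTau_OOmega_of_forall_pow
    (h : ∀ k : ℕ, S1 (Fin k → α) (OTau (Fin k → α)) (OCov (Fin k → α))) :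
    S1 α (OTau α) (OOmega α) := by
  intro 𝒰 h𝒰
  choose W hW hWcov using fun k =>
    exists_forall_range_subset_of_S1_pow k (h (k + 1)) fun n => h𝒰 (Nat.pair k n)
  set V : ℕ → Set α := fun m => W m.unpair.1 m.unpair.2
  have hV : ∀ m, V m ∈ 𝒰 m := fun m => by simpa using hW m.unpair.1 m.unpair.2
  refine ⟨V, hV, oOmega_of_forall_finite_subset (countable_range V) ?_ ?_ fun F hF => ?_⟩
  · rintro ⟨m, hm⟩
    exact (h𝒰 m).1.1.2.2 (hm ▸ hV m)
  · rintro _ ⟨m, rfl⟩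
    exact (h𝒰 m).2 _ (hV m)
  · rcases F.eq_empty_or_nonempty with rfl | hne
    · exact ⟨V 0, mem_range_self 0, empty_subset _⟩
    obtain ⟨k, f, rfl⟩ := hF.exists_fin_succ_range_eq hne
    obtain ⟨n, hn⟩ := hWcov k f
    exact ⟨V (Nat.pair k n), mem_range_self _, by simpa [V] using hn⟩

end

theorem stmt11_general (X : Set Cantor)
    (h : ∀ k : ℕ, S1 (Fin k → ↥X) (OTau (Fin k → ↥X)) (OCov (Fin k → ↥X))) :
    S1 ↥X (OTau ↥X) (OOmega ↥X) :=
  S1_OTau_OOmega_of_forall_pow h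

/-- If all finite powers of `X` satisfy S1(Τ,O), then `X` satisfies S1(Τ,Ω). -/
theorem stmt11 (X : Set Cantor) (hX : X.Infinite)
    (h : ∀ k : ℕ, S1 (Fin k → ↥X) (OTau (Fin k → ↥X)) (OCov (Fin k → ↥X))) :
    S1 ↥X (OTau ↥X) (OOmega ↥X) :=
  stmt11_general X h

end
end
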